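/- arXiv:2007.13871 — 12 statements merged into one kernel-verified Lean document; each statement's English description precedes it below -/
import Mathlib

section
/- Let d ≥ 2 and let v₀,...,v_d ∈ ℝ^d \ {0} be the vertices of a d-dimensional simplex whose convex hull contains the origin. Setting wᵢ = vᵢ/|vᵢ|, there exist indices 0 ≤ i < j ≤ d with wᵢ · wⱼ ≤ -1/d. -/
/-!
Write `0 = ∑ μᵢ wᵢ` with `μᵢ = tᵢ ‖vᵢ‖ ≥ 0`, where `t` are convex weights; at least two `μᵢ` are
positive since the `wᵢ` are nonzero. If all `⟪wᵢ, wⱼ⟫ > -1/d` for `i ≠ j`, then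
`0 = ‖∑ μᵢ wᵢ‖² = ∑ μᵢ μⱼ ⟪wᵢ, wⱼ⟫` strictly exceeds `∑ μᵢ μⱼ Gᵢⱼ`, where `G` is the Gram matrix
of a regular simplex (`1` on the diagonal, `-1/d` off it). But this form is positive semidefinite,
being `((d + 1) ∑ μᵢ² - (∑ μᵢ)²) / d ≥ 0` by Cauchy–Schwarz.
-/

open scoped RealInnerProductSpace

open Finset

theorem exists_nonneg_sum_eq_one_of_mem_convexHull_range {R E ι : Type*} [Field R] [LinearOrder R]
    [IsStrictOrderedRing R] [AddCommGroup E] [Module R E] [Fintype ι] {v : ι → E} {x : E}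
    (hx : x ∈ convexHull R (Set.range v)) :
    ∃ w : ι → R, (∀ i, 0 ≤ w i) ∧ ∑ i, w i = 1 ∧ ∑ i, w i • v i = x := by
  classical
  rw [convexHull_range_eq_exists_affineCombination] at hx
  obtain ⟨s, w, hw₀, hw₁, rfl⟩ := hx
  refine ⟨Set.indicator s w, fun i => ?_, ?_, ?_⟩
  · by_cases hi : i ∈ s <;> simp [hi, hw₀]
  · rwa [sum_indicator_subset _ (subset_univ s)]
  · rw [affineCombination_eq_linear_combination s v w hw₁,
      ← sum_indicator_subset _ (subset_univ s)]
    exact sum_congr rfl fun i _ => by by_cases hi : i ∈ s <;> simp [hi]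

theorem exists_ne_pos_of_sum_smul_eq_zero {R M ι : Type*} [Field R] [LinearOrder R]
    [AddCommGroup M] [Module R M] [Fintype ι] {μ : ι → R} {w : ι → M}
    (hμ : ∀ i, 0 ≤ μ i) (hw : ∀ i, w i ≠ 0) (hsum : ∑ i, μ i • w i = 0) {a : ι}
    (ha : 0 < μ a) : ∃ b, b ≠ a ∧ 0 < μ b := by
  by_contra! h
  have : μ a • w a = 0 := by
    rw [← hsum, sum_eq_single a (fun b _ hb => by rw [le_antisymm (h b hb) (hμ b), zero_smul])
      (by simp)]
  exact (smul_ne_zero ha.ne' (hw a)) this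

section RegularSimplex

variable {ι : Type*} [Fintype ι] [DecidableEq ι]

/-- The Gram matrix of the `n + 1` unit vectors pointing to the vertices of a regular simplex
centred at the origin. -/
noncomputable def regularSimplexGram (n : ℕ) (i j : ι) : ℝ := if i = j then 1 else -(1 / n)

theorem sum_sum_mul_regularSimplexGram_nonneg {n : ℕ} (hι : Fintype.card ι = n + 1)
    (μ : ι → ℝ) : 0 ≤ ∑ i, ∑ j, μ i * μ j * regularSimplexGram n i j := by
  have hsplit : ∀ i j, μ i * μ j * regularSimplexGram n i j
      = -(1 / n) * (μ i * μ j) + if i = j then (1 + 1 / n) * μ i ^ 2 else 0 := by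
    intro i j
    unfold regularSimplexGram
    split_ifs with h
    · subst h; ring
    · ring
  have hcs : (∑ i, μ i) ^ 2 ≤ (n + 1) * ∑ i, μ i ^ 2 := by
    simpa [hι] using sq_sum_le_card_mul_sum_sq (s := univ) (f := μ)
  have hexpand : ∑ i, ∑ j, μ i * μ j * regularSimplexGram n i j
      = (1 + 1 / n) * ∑ i, μ i ^ 2 - 1 / n * (∑ i, μ i) ^ 2 := by
    simp only [hsplit, sum_add_distrib, sum_ite_eq, mem_univ, if_true, ← mul_sum, ← sum_mul]
    ring
  rw [hexpand, sub_nonneg]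
  rcases n.eq_zero_or_pos with rfl | hn
  · -- `1 / 0 = 0` in Lean, so the form is just `∑ μᵢ²`.
    simpa using sum_nonneg fun i _ => sq_nonneg (μ i)
  · have hn : (0 : ℝ) < n := by exact_mod_cast hn
    rw [one_div_mul_eq_div, one_add_div hn.ne', div_mul_eq_mul_div]
    exact div_le_div_of_nonneg_right hcs hn.le

end RegularSimplex

theorem exists_inner_le_of_sum_smul_eq_zero {ι E : Type*} [Fintype ι] [NormedAddCommGroup E]
    [InnerProductSpace ℝ E] {n : ℕ} (hι : Fintype.card ι = n + 1) {w : ι → E}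
    (hw : ∀ i, ‖w i‖ = 1) {μ : ι → ℝ} (hμ : ∀ i, 0 ≤ μ i) (hpos : ∃ i, 0 < μ i)
    (hsum : ∑ i, μ i • w i = 0) : ∃ i j, i ≠ j ∧ ⟪w i, w j⟫ ≤ -(1 / n) := by
  classical
  by_contra! hgt
  obtain ⟨a, ha⟩ := hpos
  obtain ⟨b, hba, hb⟩ := exists_ne_pos_of_sum_smul_eq_zero hμ
    (fun i => norm_ne_zero_iff.mp (by simp [hw i])) hsum ha
  have hgram : ∑ i, ∑ j, μ i * μ j * ⟪w i, w j⟫ = 0 := by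
    calc ∑ i, ∑ j, μ i * μ j * ⟪w i, w j⟫ = ⟪∑ i, μ i • w i, ∑ j, μ j • w j⟫ := by
          simp_rw [sum_inner, inner_sum, real_inner_smul_left, real_inner_smul_right, mul_assoc]
      _ = 0 := by rw [hsum, inner_zero_left]
  have hle : ∀ i j, regularSimplexGram n i j ≤ ⟪w i, w j⟫ := by
    intro i j
    by_cases hij : i = j
    · simp [regularSimplexGram, hij, hw]
    · simpa [regularSimplexGram, hij] using (hgt i j hij).le
  have hlt : ∑ i, ∑ j, μ i * μ j * regularSimplexGram n i j
      < ∑ i, ∑ j, μ i * μ j * ⟪w i, w j⟫ := by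
    simp_rw [← Fintype.sum_prod_type']
    refine sum_lt_sum (fun p _ => ?_) ⟨(a, b), mem_univ _, ?_⟩
    · exact mul_le_mul_of_nonneg_left (hle _ _) (mul_nonneg (hμ _) (hμ _))
    · refine mul_lt_mul_of_pos_left ?_ (mul_pos ha hb)
      simpa [regularSimplexGram, hba.symm] using hgt a b hba.symm
  linarith [sum_sum_mul_regularSimplexGram_nonneg hι μ]

theorem min_inner_le_of_simplex_contains_origin_general
    (d : ℕ)
    (v : Fin (d + 1) → EuclideanSpace ℝ (Fin d))
    (hne : ∀ i, v i ≠ 0)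
    (h0 : (0 : EuclideanSpace ℝ (Fin d)) ∈ convexHull ℝ (Set.range v)) :
    ∃ i j : Fin (d + 1), i < j ∧
      ⟪‖v i‖⁻¹ • v i, ‖v j‖⁻¹ • v j⟫ ≤ -(1 / (d : ℝ)) := by
  obtain ⟨t, ht₀, ht₁, htv⟩ := exists_nonneg_sum_eq_one_of_mem_convexHull_range h0
  obtain ⟨a, -, ha⟩ : ∃ a ∈ univ, (0 : ℝ) < t a :=
    exists_lt_of_sum_lt (by simp [ht₁])
  have hw : ∀ i, ‖‖v i‖⁻¹ • v i‖ = 1 := fun i => norm_smul_inv_norm (𝕜 := ℝ) (hne i)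
  have hsum : ∑ i, (t i * ‖v i‖) • (‖v i‖⁻¹ • v i) = 0 := by
    simp_rw [smul_smul, mul_assoc, mul_inv_cancel₀ (norm_ne_zero_iff.mpr (hne _)), mul_one]
    exact htv
  obtain ⟨i, j, hij, hle⟩ := exists_inner_le_of_sum_smul_eq_zero (Fintype.card_fin _)
    hw (fun i => mul_nonneg (ht₀ i) (norm_nonneg _))
    ⟨a, mul_pos ha (norm_pos_iff.mpr (hne a))⟩ hsum
  rcases hij.lt_or_gt with h | h
  · exact ⟨i, j, h, hle⟩
  · exact ⟨j, i, h, by rwa [real_inner_comm]⟩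

/-- If `v₀,...,v_d` are nonzero, affinely independent points of `ℝ^d` whose convex hull
contains the origin, then two of the normalized vectors `wᵢ = vᵢ/‖vᵢ‖` have inner
product at most `-1/d`. -/
theorem min_inner_le_of_simplex_contains_origin
    (d : ℕ) (hd : 2 ≤ d)
    (v : Fin (d + 1) → EuclideanSpace ℝ (Fin d))
    (hindep : AffineIndependent ℝ v)
    (hne : ∀ i, v i ≠ 0)
    (h0 : (0 : EuclideanSpace ℝ (Fin d)) ∈ convexHull ℝ (Set.range v)) :
    ∃ i j : Fin (d + 1), i < j ∧
      ⟪‖v i‖⁻¹ • v i, ‖v j‖⁻¹ • v j⟫ ≤ -(1 / (d : ℝ)) :=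
  min_inner_le_of_simplex_contains_origin_general d v hne h0
end

section
/- Let d ≥ 2 and let v₀,...,v_d ∈ ℝ^d \ {0} be vertices of a d-simplex containing the origin, with wᵢ = vᵢ/|vᵢ|. If min over i<j of wᵢ · wⱼ equals -1/d, then wᵢ · wⱼ = -1/d for all i ≠ j, i.e. the wᵢ form the vertices of a regular simplex inscribed in the unit sphere. -/
/-!
Write `0 = ∑ μᵢ vᵢ` as a convex combination and put `cᵢ = μᵢ ‖vᵢ‖ ≥ 0`, so that `∑ cᵢ wᵢ = 0`
with `c ≠ 0`. For `d + 1` unit vectors `wᵢ` one has the identity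
`d ‖∑ cᵢ wᵢ‖² = ½ ∑_{i,j} (cᵢ - cⱼ)² + ∑_{i ≠ j} cᵢ cⱼ (d ⟪wᵢ, wⱼ⟫ + 1)`,
and both sums on the right are nonnegative once every `⟪wᵢ, wⱼ⟫ ≥ -1/d`. Hence both vanish:
the `cᵢ` are all equal, so all positive, and then every `d ⟪wᵢ, wⱼ⟫ + 1` is zero.
-/

open scoped RealInnerProductSpace

open Finset

section

variable {ι E : Type*} [Fintype ι] [NormedAddCommGroup E] [InnerProductSpace ℝ E]

theorem sum_sum_sub_sq (c : ι → ℝ) :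
    ∑ i, ∑ j, (c i - c j) ^ 2 = 2 * (Fintype.card ι * ∑ i, c i ^ 2 - (∑ i, c i) ^ 2) := by
  simp only [sub_sq, sum_add_distrib, sum_sub_distrib, sum_const, card_univ, ← mul_sum,
    ← sum_mul, nsmul_eq_mul]
  ring

theorem norm_sum_smul_sq (c : ι → ℝ) (w : ι → E) :
    ‖∑ i, c i • w i‖ ^ 2 = ∑ i, ∑ j, c i * c j * ⟪w i, w j⟫ := by
  rw [← real_inner_self_eq_norm_sq, sum_inner]
  refine sum_congr rfl fun i _ => ?_
  rw [inner_sum]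
  refine sum_congr rfl fun j _ => ?_
  rw [real_inner_smul_left, real_inner_smul_right, mul_assoc]

theorem mem_convexHull_range_iff_exists_sum {x : E} {v : ι → E} :
    x ∈ convexHull ℝ (Set.range v) ↔
      ∃ μ : ι → ℝ, (∀ i, 0 ≤ μ i) ∧ ∑ i, μ i = 1 ∧ ∑ i, μ i • v i = x := by
  classical
  rw [convexHull_range_eq_exists_affineCombination]
  constructor
  · rintro ⟨s, μ, hμ0, hμ1, rfl⟩
    refine ⟨fun i => if i ∈ s then μ i else 0, fun i => ?_, ?_, ?_⟩
    · dsimp only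
      split_ifs with hi
      exacts [hμ0 i hi, le_rfl]
    · simpa [sum_ite_mem] using hμ1
    · simp [s.affineCombination_eq_linear_combination v μ hμ1, ite_smul, sum_ite_mem]
  · rintro ⟨μ, hμ0, hμ1, rfl⟩
    exact ⟨univ, μ, fun i _ => hμ0 i, hμ1, univ.affineCombination_eq_linear_combination v μ hμ1⟩

theorem mul_norm_sum_smul_sq_eq [DecidableEq ι] {d : ℕ} (hcard : Fintype.card ι = d + 1)
    {w : ι → E} (hw : ∀ i, ‖w i‖ = 1) (c : ι → ℝ) :
    d * ‖∑ i, c i • w i‖ ^ 2 = (∑ i, ∑ j, (c i - c j) ^ 2) / 2 +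
      ∑ i, ∑ j ∈ univ.erase i, c i * c j * (d * ⟪w i, w j⟫ + 1) := by
  have hdiag : ∀ i, ⟪w i, w i⟫ = 1 := fun i => by rw [real_inner_self_eq_norm_sq, hw, one_pow]
  have hoff : ∑ i, ∑ j ∈ univ.erase i, c i * c j * (d * ⟪w i, w j⟫ + 1) =
      d * ∑ i, ∑ j, c i * c j * ⟪w i, w j⟫ + (∑ i, c i) ^ 2 - (d + 1) * ∑ i, c i ^ 2 := by
    rw [sq, sum_mul_sum, add_mul, one_mul, mul_sum, mul_sum]
    simp only [sum_erase_eq_sub (mem_univ _), hdiag, mul_add, mul_left_comm _ (d : ℝ), mul_one,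
      ← sq, sum_sub_distrib, sum_add_distrib, mul_sum]
  rw [hoff, norm_sum_smul_sq, sum_sum_sub_sq, hcard]
  push_cast
  ring

theorem inner_eq_neg_one_div_of_sum_smul_eq_zero {d : ℕ} (hcard : Fintype.card ι = d + 1)
    {w : ι → E} (hw : ∀ i, ‖w i‖ = 1)
    (hge : ∀ i j, i ≠ j → -(1 / (d : ℝ)) ≤ ⟪w i, w j⟫)
    {c : ι → ℝ} (hc0 : ∀ i, 0 ≤ c i) (hc : c ≠ 0) (hsum : ∑ i, c i • w i = 0)
    {i j : ι} (hij : i ≠ j) : ⟪w i, w j⟫ = -(1 / (d : ℝ)) := by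
  classical
  have hd : (0 : ℝ) < d := by
    have := Fintype.one_lt_card_iff.2 ⟨i, j, hij⟩
    exact_mod_cast (show 0 < d by omega)
  have hterm : ∀ a, ∀ b ∈ univ.erase a, 0 ≤ c a * c b * (d * ⟪w a, w b⟫ + 1) := by
    intro a b hb
    have := mul_le_mul_of_nonneg_left (hge a b (ne_of_mem_erase hb).symm) hd.le
    rw [mul_neg, mul_one_div_cancel hd.ne'] at this
    exact mul_nonneg (mul_nonneg (hc0 a) (hc0 b)) (by linarith)
  have hidentity := mul_norm_sum_smul_sq_eq hcard hw c
  rw [hsum, norm_zero, zero_pow two_ne_zero, mul_zero] at hidentity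
  have hsq := sum_nonneg fun i (_ : i ∈ univ) => sum_nonneg fun j (_ : j ∈ univ) =>
    sq_nonneg (c i - c j)
  have hoff := sum_nonneg fun i (_ : i ∈ univ) => sum_nonneg (hterm i)
  have hsq0 : ∑ i, ∑ j, (c i - c j) ^ 2 = 0 := by linarith
  have hoff0 : ∑ i, ∑ j ∈ univ.erase i, c i * c j * (d * ⟪w i, w j⟫ + 1) = 0 := by linarith
  have hconst : ∀ i j, c i = c j := fun i j => by
    have := (sum_eq_zero_iff_of_nonneg fun i _ => sum_nonneg fun j _ => sq_nonneg (c i - c j)).1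
      hsq0 i (mem_univ i)
    have := (sum_eq_zero_iff_of_nonneg fun j _ => sq_nonneg (c i - c j)).1 this j (mem_univ j)
    exact sub_eq_zero.1 (pow_eq_zero_iff two_ne_zero |>.1 this)
  obtain ⟨k, hk⟩ := Function.ne_iff.1 hc
  have hcij : c i * c j ≠ 0 := mul_ne_zero (hconst i k ▸ hk) (hconst j k ▸ hk)
  have := (sum_eq_zero_iff_of_nonneg fun i _ => sum_nonneg (hterm i)).1 hoff0 i (mem_univ i)
  have := (sum_eq_zero_iff_of_nonneg (hterm i)).1 this j (mem_erase.2 ⟨hij.symm, mem_univ j⟩)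
  have := (mul_eq_zero.1 this).resolve_left hcij
  field_simp
  linarith

theorem exists_nonneg_sum_smul_inv_norm_smul_eq_zero {v : ι → E} (hne : ∀ i, v i ≠ 0)
    (h0 : 0 ∈ convexHull ℝ (Set.range v)) :
    ∃ c : ι → ℝ, (∀ i, 0 ≤ c i) ∧ c ≠ 0 ∧ ∑ i, c i • (‖v i‖⁻¹ • v i) = 0 := by
  obtain ⟨μ, hμ0, hμ1, hμv⟩ := mem_convexHull_range_iff_exists_sum.1 h0
  obtain ⟨k, hk⟩ : ∃ k, μ k ≠ 0 := by
    by_contra! h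
    simp [h] at hμ1
  refine ⟨fun i => μ i * ‖v i‖, fun i => mul_nonneg (hμ0 i) (norm_nonneg _),
    Function.ne_iff.2 ⟨k, mul_ne_zero hk (norm_ne_zero_iff.2 (hne k))⟩, ?_⟩
  rw [← hμv]
  refine sum_congr rfl fun i _ => ?_
  rw [smul_smul, mul_assoc, mul_inv_cancel₀ (norm_ne_zero_iff.2 (hne i)), mul_one]

end

theorem regular_simplex_of_min_inner_eq_general
    (d : ℕ)
    (v : Fin (d + 1) → EuclideanSpace ℝ (Fin d))
    (hne : ∀ i, v i ≠ 0)
    (h0 : (0 : EuclideanSpace ℝ (Fin d)) ∈ convexHull ℝ (Set.range v))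
    (hge : ∀ i j : Fin (d + 1), i < j →
      -(1 / (d : ℝ)) ≤ ⟪‖v i‖⁻¹ • v i, ‖v j‖⁻¹ • v j⟫) :
    ∀ i j : Fin (d + 1), i ≠ j →
      ⟪‖v i‖⁻¹ • v i, ‖v j‖⁻¹ • v j⟫ = -(1 / (d : ℝ)) := by
  obtain ⟨c, hc0, hc, hsum⟩ := exists_nonneg_sum_smul_inv_norm_smul_eq_zero hne h0
  have hge' : ∀ i j, i ≠ j → -(1 / (d : ℝ)) ≤ ⟪‖v i‖⁻¹ • v i, ‖v j‖⁻¹ • v j⟫ := by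
    intro i j hij
    rcases hij.lt_or_gt with h | h
    · exact hge i j h
    · rw [real_inner_comm]
      exact hge j i h
  have hunit : ∀ i, ‖‖v i‖⁻¹ • v i‖ = 1 := fun i => by
    simpa using norm_smul_inv_norm (𝕜 := ℝ) (hne i)
  exact fun i j hij =>
    inner_eq_neg_one_div_of_sum_smul_eq_zero (Fintype.card_fin _) hunit hge' hc0 hc hsum hij

/-- Equality case: if the minimum over `i < j` of `wᵢ · wⱼ` (with `wᵢ = vᵢ/‖vᵢ‖`)
equals `-1/d`, then all pairwise inner products equal `-1/d`, i.e. the `wᵢ` are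
the vertices of a regular simplex inscribed in the unit sphere. -/
theorem regular_simplex_of_min_inner_eq
    (d : ℕ) (hd : 2 ≤ d)
    (v : Fin (d + 1) → EuclideanSpace ℝ (Fin d))
    (hindep : AffineIndependent ℝ v)
    (hne : ∀ i, v i ≠ 0)
    (h0 : (0 : EuclideanSpace ℝ (Fin d)) ∈ convexHull ℝ (Set.range v))
    (hge : ∀ i j : Fin (d + 1), i < j →
      -(1 / (d : ℝ)) ≤ ⟪‖v i‖⁻¹ • v i, ‖v j‖⁻¹ • v j⟫)
    (hattained : ∃ i j : Fin (d + 1), i < j ∧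
      ⟪‖v i‖⁻¹ • v i, ‖v j‖⁻¹ • v j⟫ = -(1 / (d : ℝ))) :
    ∀ i j : Fin (d + 1), i ≠ j →
      ⟪‖v i‖⁻¹ • v i, ‖v j‖⁻¹ • v j⟫ = -(1 / (d : ℝ)) :=
  regular_simplex_of_min_inner_eq_general d v hne h0 hge
end

section
/- Let d ≥ 2 and let w₀,...,w_d be unit vectors in ℝ^d forming the vertices of a d-simplex containing 0 in its interior, so Σ aᵢwᵢ = 0 for some aᵢ > 0. If wᵢ · wⱼ ≥ -1/d for all 1 ≤ i < j ≤ d, then w₀ · w₁ ≤ -1/d, where a₀ = minᵢ aᵢ and a₁ = maxᵢ aᵢ. -/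
/-!
Pairing `∑ aᵢ wᵢ = 0` with the unit vector `w₁` gives
`a₀ ⟪w₀, w₁⟫ + a₁ + ∑_{i ≥ 2} aᵢ ⟪wᵢ, w₁⟫ = 0`. Each of the `d - 1` remaining terms is at least
`-aᵢ/d ≥ -a₁/d`, so `a₀ ⟪w₀, w₁⟫ ≤ -a₁ + (d - 1) a₁/d = -a₁/d ≤ -a₀/d`.
-/

open scoped RealInnerProductSpace
open Finset

theorem inner_le_of_sum_smul_eq_zero {ι E : Type*} [Fintype ι] [DecidableEq ι]
    [NormedAddCommGroup E] [InnerProductSpace ℝ E] {w : ι → E} {a : ι → ℝ}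
    (hsum : ∑ i, a i • w i = 0) {j k : ι} (hjk : j ≠ k) (hk : ‖w k‖ = 1) {c : ℝ} (hc : 0 ≤ c)
    (ha : ∀ i, 0 ≤ a i) (hmax : ∀ i, a i ≤ a k) (hge : ∀ i, i ≠ j → i ≠ k → -c ≤ ⟪w i, w k⟫) :
    a j * ⟪w j, w k⟫ ≤ a k * ((Fintype.card ι - 2) * c - 1) := by
  set s := (univ.erase j).erase k
  have hk_mem : k ∈ univ.erase j := mem_erase.2 ⟨hjk.symm, mem_univ k⟩
  have hsplit : a j * ⟪w j, w k⟫ + (a k + ∑ i ∈ s, a i * ⟪w i, w k⟫) = 0 := by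
    have h := congrArg (⟪·, w k⟫) hsum
    simp only [sum_inner, real_inner_smul_left, inner_zero_left] at h
    rwa [← add_sum_erase _ _ (mem_univ j), ← add_sum_erase _ _ hk_mem,
      real_inner_self_eq_norm_sq, hk, one_pow, mul_one] at h
  have hcard : (#s : ℝ) = Fintype.card ι - 2 := by
    have : #s + 2 = Fintype.card ι := by
      rw [card_erase_of_mem hk_mem, card_erase_of_mem (mem_univ j), card_univ]
      have := Fintype.one_lt_card_iff_nontrivial.2 ⟨j, k, hjk⟩
      omega
    rw [← this]; push_cast; ring
  have hrest : #s • (-(a k * c)) ≤ ∑ i ∈ s, a i * ⟪w i, w k⟫ := by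
    refine card_nsmul_le_sum _ _ _ fun i hi => ?_
    obtain ⟨hik, hij, -⟩ := mem_erase.1 hi |>.imp_right mem_erase.1
    calc -(a k * c) ≤ a i * -c := by nlinarith [hmax i]
      _ ≤ a i * ⟪w i, w k⟫ := mul_le_mul_of_nonneg_left (hge i hij hik) (ha i)
  rw [nsmul_eq_mul, hcard] at hrest
  linear_combination hrest + hsplit

theorem inner_w0_w1_le_general
    (d : ℕ) (hd : 2 ≤ d)
    (w : Fin (d + 1) → EuclideanSpace ℝ (Fin d))
    (hunit : ∀ i, ‖w i‖ = 1)
    (a : Fin (d + 1) → ℝ)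
    (ha : ∀ i, 0 < a i)
    (hsum : ∑ i, a i • w i = 0)
    (hmax : ∀ i, a i ≤ a 1)
    (hge : ∀ i j : Fin (d + 1), i ≠ 0 → j ≠ 0 → i < j →
      -(1 / (d : ℝ)) ≤ ⟪w i, w j⟫) :
    ⟪w 0, w 1⟫ ≤ -(1 / (d : ℝ)) := by
  have hd_pos : (0 : ℝ) < d := by positivity
  have hval_one : ((1 : Fin (d + 1)) : ℕ) = 1 := by
    rw [Fin.val_one', Nat.one_mod_eq_one]; omega
  have h01 : (0 : Fin (d + 1)) ≠ 1 := Fin.ne_of_val_ne (by rw [Fin.val_zero, hval_one]; omega)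
  have hge_one : ∀ i, i ≠ 0 → i ≠ 1 → -(1 / (d : ℝ)) ≤ ⟪w i, w 1⟫ := fun i hi0 hi1 => by
    have h1i : 1 < i := by
      rw [Ne, Fin.ext_iff, Fin.val_zero] at hi0
      rw [Ne, Fin.ext_iff, hval_one] at hi1
      rw [Fin.lt_def, hval_one]; omega
    rw [real_inner_comm]
    exact hge 1 i h01.symm hi0 h1i
  have hbound := inner_le_of_sum_smul_eq_zero hsum h01 (hunit 1) (by positivity)
    (fun i => (ha i).le) hmax hge_one
  rw [Fintype.card_fin] at hbound
  have hcoef : a 1 * (((d + 1 : ℕ) - 2) * (1 / d) - 1 : ℝ) = -(a 1 / d) := by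
    field_simp; push_cast; ring
  refine le_of_mul_le_mul_left ?_ (ha 0)
  calc a 0 * ⟪w 0, w 1⟫ ≤ -(a 1 / d) := hcoef ▸ hbound
    _ ≤ -(a 0 / d) := neg_le_neg (div_le_div_of_nonneg_right (hmax 0) hd_pos.le)
    _ = a 0 * -(1 / d) := by ring

/-- Key induction step: unit vectors `w₀,...,w_d` in `ℝ^d` form a simplex with `0` in the
interior of its convex hull, `∑ aᵢ wᵢ = 0` with `aᵢ > 0`, `a₀` minimal and `a₁` maximal.
If `wᵢ · wⱼ ≥ -1/d` for all `1 ≤ i < j ≤ d`, then `w₀ · w₁ ≤ -1/d`. -/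
theorem inner_w0_w1_le
    (d : ℕ) (hd : 2 ≤ d)
    (w : Fin (d + 1) → EuclideanSpace ℝ (Fin d))
    (hunit : ∀ i, ‖w i‖ = 1)
    (hindep : AffineIndependent ℝ w)
    (h0 : (0 : EuclideanSpace ℝ (Fin d)) ∈ interior (convexHull ℝ (Set.range w)))
    (a : Fin (d + 1) → ℝ)
    (ha : ∀ i, 0 < a i)
    (hsum : ∑ i, a i • w i = 0)
    (hmin : ∀ i, a 0 ≤ a i)
    (hmax : ∀ i, a i ≤ a 1)
    (hge : ∀ i j : Fin (d + 1), i ≠ 0 → j ≠ 0 → i < j →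
      -(1 / (d : ℝ)) ≤ ⟪w i, w j⟫) :
    ⟪w 0, w 1⟫ ≤ -(1 / (d : ℝ)) :=
  inner_w0_w1_le_general d hd w hunit a ha hsum hmax hge
end

section
/- Let d ≥ 2 and A ⊂ ℝ^d. Define ∠A as the supremum over triples x, y, z ∈ A (with x ≠ y, z ≠ y) of the angle ∠xyz at the vertex y. If ∠A < arccos(-1/d), then no point of A lies in the convex hull of the other points of A; equivalently, A is in convex position. -/
/-!
If `a = ∑ wᵢ zᵢ` is a convex combination of other points of `A`, Carathéodory lets us take the
`zᵢ` affinely independent, so there are `n ≤ d + 1` of them. With `vᵢ = zᵢ - a` and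
`tᵢ = wᵢ ‖vᵢ‖`, every angle at `a` being below `arccos (-1/d)` gives
`0 = ‖∑ wᵢ vᵢ‖² > ∑ tᵢ² - (1/d) ∑_{i ≠ j} tᵢ tⱼ ≥ (1 - (n - 1)/d) ∑ tᵢ² ≥ 0`,
the second inequality being Cauchy–Schwarz `(∑ tᵢ)² ≤ n ∑ tᵢ²`.
-/

open EuclideanGeometry

open Finset in
theorem Finset.sum_sum_eq_sum_diag_add_sum_offDiag {ι M : Type*} [DecidableEq ι] [AddCommMonoid M]
    (s : Finset ι) (f : ι → ι → M) :
    ∑ i ∈ s, ∑ j ∈ s, f i j = ∑ i ∈ s, f i i + ∑ p ∈ s.offDiag, f p.1 p.2 := by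
  rw [← sum_product', ← diag_union_offDiag, sum_union (disjoint_diag_offDiag _), sum_diag]

namespace InnerProductGeometry

variable {E : Type*} [NormedAddCommGroup E] [InnerProductSpace ℝ E]

theorem mul_norm_mul_norm_lt_inner_of_angle_lt_arccos {x y : E} (hx : x ≠ 0) (hy : y ≠ 0) {r : ℝ}
    (h : angle x y < Real.arccos r) : r * (‖x‖ * ‖y‖) < inner ℝ x y := by
  have hxy : 0 < ‖x‖ * ‖y‖ := by positivity
  rw [← lt_div_iff₀ hxy]
  exact lt_of_not_ge fun hle => (Real.antitone_arccos hle).not_gt h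

open Finset in
theorem sum_smul_ne_zero_of_neg_mul_lt_inner {ι : Type*} [Fintype ι] [Nonempty ι]
    {v : ι → E} {w : ι → ℝ} {c : ℝ} (hv : ∀ i, v i ≠ 0) (hw : ∀ i, 0 < w i) (hc₀ : 0 ≤ c)
    (hc : (Fintype.card ι - 1 : ℝ) * c ≤ 1)
    (hinner : ∀ i j, i ≠ j → -c * (‖v i‖ * ‖v j‖) < inner ℝ (v i) (v j)) :
    ∑ i, w i • v i ≠ 0 := by
  classical
  rcases subsingleton_or_nontrivial ι with hι | hι
  · obtain ⟨i⟩ := ‹Nonempty ι›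
    rw [Fintype.sum_subsingleton _ i]
    exact smul_ne_zero (hw i).ne' (hv i)
  set t : ι → ℝ := fun i => w i * ‖v i‖
  set S := ∑ i, t i ^ 2
  have hnorm : ‖∑ i, w i • v i‖ ^ 2
      = S + ∑ p ∈ univ.offDiag, w p.1 * w p.2 * inner ℝ (v p.1) (v p.2) := by
    rw [← real_inner_self_eq_norm_sq, sum_inner]
    simp only [inner_sum, real_inner_smul_left, real_inner_smul_right, ← mul_assoc]
    rw [sum_sum_eq_sum_diag_add_sum_offDiag]
    congr 1 <;> refine sum_congr rfl fun i _ => ?_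
    · rw [real_inner_self_eq_norm_sq]
      ring
    · ring
  have hoff : ∑ p ∈ univ.offDiag, t p.1 * t p.2 ≤ (Fintype.card ι - 1) * S := by
    have hsq : (∑ i, t i) ^ 2 = S + ∑ p ∈ univ.offDiag, t p.1 * t p.2 := by
      rw [sq, sum_mul_sum, sum_sum_eq_sum_diag_add_sum_offDiag]
      simp only [S, sq]
    have := sq_sum_le_card_mul_sum_sq (s := univ) (f := t)
    rw [card_univ, hsq] at this
    linarith
  have hlt : -S < ∑ p ∈ univ.offDiag, w p.1 * w p.2 * inner ℝ (v p.1) (v p.2) := calc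
    -S ≤ -c * ((Fintype.card ι - 1) * S) := by nlinarith [show 0 ≤ S by positivity]
    _ ≤ -c * ∑ p ∈ univ.offDiag, t p.1 * t p.2 := mul_le_mul_of_nonpos_left hoff (by linarith)
    _ = ∑ p ∈ univ.offDiag, w p.1 * w p.2 * (-c * (‖v p.1‖ * ‖v p.2‖)) := by
      rw [mul_sum]; exact sum_congr rfl fun p _ => by ring
    _ < ∑ p ∈ univ.offDiag, w p.1 * w p.2 * inner ℝ (v p.1) (v p.2) := by
      obtain ⟨i, j, hij⟩ := exists_pair_ne ι
      refine sum_lt_sum_of_nonempty ⟨(i, j), mem_offDiag.2 ⟨mem_univ i, mem_univ j, hij⟩⟩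
        fun p hp => ?_
      have := mul_pos (hw p.1) (hw p.2)
      gcongr
      exact hinner _ _ (mem_offDiag.1 hp).2.2
  intro h0
  rw [h0, norm_zero] at hnorm
  linarith

end InnerProductGeometry

open InnerProductGeometry Module in
theorem EuclideanGeometry.notMem_convexHull_diff_singleton_of_angle_lt_arccos {E : Type*}
    [NormedAddCommGroup E] [InnerProductSpace ℝ E] [FiniteDimensional ℝ E]
    (hE : 0 < finrank ℝ E) {A : Set E}
    (hA : ∀ x ∈ A, ∀ y ∈ A, ∀ z ∈ A, x ≠ y → z ≠ y →
      ∠ x y z < Real.arccos (-(1 / (finrank ℝ E : ℝ))))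
    {a : E} (ha : a ∈ A) : a ∉ convexHull ℝ (A \ {a}) := by
  intro hmem
  obtain ⟨ι, _, z, w, hrange, hind, hw, hw1, hza⟩ := eq_pos_convex_span_of_mem_convexHull hmem
  have hz i : z i ∈ A ∧ z i ≠ a := hrange (Set.mem_range_self i)
  have hcard : Fintype.card ι ≤ finrank ℝ E + 1 :=
    hind.card_le_finrank_succ.trans (Nat.succ_le_succ (Submodule.finrank_le _))
  have : Nonempty ι := (Finset.nonempty_of_sum_ne_zero (hw1 ▸ one_ne_zero)).to_type
  refine sum_smul_ne_zero_of_neg_mul_lt_inner (v := fun i => z i - a) (c := 1 / finrank ℝ E)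
    (fun i => sub_ne_zero.2 (hz i).2) hw (by positivity) ?_ (fun i j _ => ?_) ?_
  · rw [mul_one_div, div_le_one (by exact_mod_cast hE), sub_le_iff_le_add]
    exact_mod_cast hcard
  · exact mul_norm_mul_norm_lt_inner_of_angle_lt_arccos (sub_ne_zero.2 (hz i).2)
      (sub_ne_zero.2 (hz j).2) (hA _ (hz i).1 a ha _ (hz j).1 (hz i).2 (hz j).2)
  · simp only [smul_sub, Finset.sum_sub_distrib, ← Finset.sum_smul, hw1, one_smul, hza, sub_self]

/-- If every angle formed by points of `A ⊆ ℝ^d` is at most some `θ < arccos(-1/d)`, then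
no point of `A` lies in the convex hull of the other points: `A` is in convex position. -/
theorem convex_position_of_angle_lt
    (d : ℕ) (hd : 2 ≤ d)
    (A : Set (EuclideanSpace ℝ (Fin d)))
    (θ : ℝ) (hθ : θ < Real.arccos (-(1 / (d : ℝ))))
    (hang : ∀ x ∈ A, ∀ y ∈ A, ∀ z ∈ A, x ≠ y → z ≠ y →
      EuclideanGeometry.angle x y z ≤ θ) :
    ∀ a ∈ A, a ∉ convexHull ℝ (A \ {a}) := by
  intro a ha
  refine notMem_convexHull_diff_singleton_of_angle_lt_arccos
    (by rw [finrank_euclideanSpace_fin]; omega) ?_ ha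
  intro x hx y hy z hz hxy hzy
  rw [finrank_euclideanSpace_fin]
  exact (hang x hx y hy z hz hxy hzy).trans_lt hθ
end

section
/- For x, y, z ∈ ℝ² forming a triangle with the origin in its convex hull (all three nonzero), at least one of the three angles at the origin, ∠(x,0,y), ∠(y,0,z), ∠(z,0,x), is at least 2π/3. -/
/-!
Write `0 = a • x + b • y + c • z` as a convex combination and put `X = a • x`, `Y = b • y`,
`Z = c • z`. From `X + Y + Z = 0`,
`0 = ‖X‖² + ‖Y‖² + ‖Z‖² + 2 (⟪X, Y⟫ + ⟪Y, Z⟫ + ⟪Z, X⟫)`, while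
`‖X‖² + ‖Y‖² + ‖Z‖² ≥ ‖X‖‖Y‖ + ‖Y‖‖Z‖ + ‖Z‖‖X‖`; hence some pair has
`⟪X, Y⟫ ≤ -‖X‖‖Y‖ / 2`, i.e. `cos ∠(X, 0, Y) ≤ -1/2`. Positive scalings do not change angles;
if a coefficient vanishes, the other two points are opposite and subtend the angle `π`.
-/

open InnerProductGeometry Real
open scoped InnerProductSpace

theorem exists_smul_add_smul_add_smul_eq_of_mem_convexHull_triple {𝕜 E : Type*} [Field 𝕜]
    [LinearOrder 𝕜] [IsStrictOrderedRing 𝕜] [AddCommGroup E] [Module 𝕜 E] {x y z p : E}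
    (h : p ∈ convexHull 𝕜 {x, y, z}) :
    ∃ a b c : 𝕜, 0 ≤ a ∧ 0 ≤ b ∧ 0 ≤ c ∧ a + b + c = 1 ∧ a • x + b • y + c • z = p := by
  rw [convexHull_insert (Set.insert_nonempty y {z}), convexHull_pair,
    convexJoin_singleton_left, Set.mem_iUnion₂] at h
  obtain ⟨_, ⟨s, t, hs, ht, hst, rfl⟩, a, bc, ha, hbc, habc, rfl⟩ := h
  refine ⟨a, bc * s, bc * t, ha, mul_nonneg hbc hs, mul_nonneg hbc ht, ?_, ?_⟩
  · linear_combination habc + bc * hst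
  · rw [smul_add, smul_smul, smul_smul, add_assoc]

section InnerProductSpace

variable {V : Type*} [NormedAddCommGroup V] [InnerProductSpace ℝ V]

theorem angle_smul_smul_of_nonneg {a b : ℝ} {x y : V} (ha : 0 ≤ a) (hb : 0 ≤ b)
    (hax : a • x ≠ 0) (hby : b • y ≠ 0) : angle (a • x) (b • y) = angle x y := by
  have ha' : 0 < a := ha.lt_of_ne (by rintro rfl; simp at hax)
  have hb' : 0 < b := hb.lt_of_ne (by rintro rfl; simp at hby)
  rw [angle_smul_left_of_pos _ _ ha', angle_smul_right_of_pos _ _ hb']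

theorem two_pi_div_three_le_angle_of_inner_le {x y : V} (hx : x ≠ 0) (hy : y ≠ 0)
    (h : ⟪x, y⟫_ℝ ≤ -(‖x‖ * ‖y‖ / 2)) : 2 * π / 3 ≤ angle x y := by
  have hcos : cos (2 * π / 3) = -(1 / 2) := by
    rw [show 2 * π / 3 = π - π / 3 by ring, cos_pi_sub, cos_pi_div_three]
  have hxy : 0 < ‖x‖ * ‖y‖ := mul_pos (norm_pos_iff.2 hx) (norm_pos_iff.2 hy)
  have hle : cos (angle x y) ≤ cos (2 * π / 3) := by
    rw [hcos]
    nlinarith [cos_angle_mul_norm_mul_norm x y]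
  refine (strictAntiOn_cos.le_iff_ge ⟨angle_nonneg x y, angle_le_pi x y⟩ ⟨?_, ?_⟩).1 hle <;>
    linarith [pi_pos]

theorem angle_eq_pi_of_add_eq_zero {x y : V} (h : x + y = 0) (hx : x ≠ 0) : angle x y = π := by
  rw [eq_neg_of_add_eq_zero_right h, angle_self_neg_of_nonzero hx]

theorem inner_le_neg_half_mul_norm_of_add_add_eq_zero {X Y Z : V} (h : X + Y + Z = 0) :
    ⟪X, Y⟫_ℝ ≤ -(‖X‖ * ‖Y‖ / 2) ∨ ⟪Y, Z⟫_ℝ ≤ -(‖Y‖ * ‖Z‖ / 2) ∨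
      ⟪Z, X⟫_ℝ ≤ -(‖Z‖ * ‖X‖ / 2) := by
  by_contra! ⟨hXY, hYZ, hZX⟩
  have hsq : ‖X + Y + Z‖ ^ 2 =
      ‖X‖ ^ 2 + ‖Y‖ ^ 2 + ‖Z‖ ^ 2 + 2 * (⟪X, Y⟫_ℝ + ⟪Y, Z⟫_ℝ + ⟪Z, X⟫_ℝ) := by
    rw [norm_add_sq_real, norm_add_sq_real, inner_add_left, real_inner_comm X Z]
    ring
  rw [h, norm_zero] at hsq
  nlinarith [sq_nonneg (‖X‖ - ‖Y‖), sq_nonneg (‖Y‖ - ‖Z‖), sq_nonneg (‖Z‖ - ‖X‖)]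

theorem exists_two_pi_div_three_le_angle_of_add_add_eq_zero {X Y Z : V} (h : X + Y + Z = 0)
    (hne : X ≠ 0 ∨ Y ≠ 0 ∨ Z ≠ 0) :
    (X ≠ 0 ∧ Y ≠ 0 ∧ 2 * π / 3 ≤ angle X Y) ∨ (Y ≠ 0 ∧ Z ≠ 0 ∧ 2 * π / 3 ≤ angle Y Z) ∨
      (Z ≠ 0 ∧ X ≠ 0 ∧ 2 * π / 3 ≤ angle Z X) := by
  have of_add_eq_zero {x y : V} (hxy : x + y = 0) (hx : x ≠ 0) :
      x ≠ 0 ∧ y ≠ 0 ∧ 2 * π / 3 ≤ angle x y := by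
    refine ⟨hx, fun hy => hx (by simpa [hy] using hxy), ?_⟩
    rw [angle_eq_pi_of_add_eq_zero hxy hx]
    linarith [pi_pos]
  by_cases hX : X = 0
  · subst hX
    have hY : Y ≠ 0 := fun hY => by simp_all
    exact Or.inr (Or.inl (of_add_eq_zero (by simpa using h) hY))
  by_cases hY : Y = 0
  · subst hY
    exact Or.inr (Or.inr (of_add_eq_zero (by simpa [add_comm] using h)
      fun hZ => hX (by simpa [hZ] using h)))
  by_cases hZ : Z = 0
  · subst hZ
    exact Or.inl (of_add_eq_zero (by simpa using h) hX)
  rcases inner_le_neg_half_mul_norm_of_add_add_eq_zero h with h' | h' | h'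
  · exact Or.inl ⟨hX, hY, two_pi_div_three_le_angle_of_inner_le hX hY h'⟩
  · exact Or.inr (Or.inl ⟨hY, hZ, two_pi_div_three_le_angle_of_inner_le hY hZ h'⟩)
  · exact Or.inr (Or.inr ⟨hZ, hX, two_pi_div_three_le_angle_of_inner_le hZ hX h'⟩)

end InnerProductSpace

theorem exists_angle_ge_two_pi_div_three_general
    (x y z : EuclideanSpace ℝ (Fin 2))
    (hx : x ≠ 0) (hy : y ≠ 0) (hz : z ≠ 0)
    (h0 : (0 : EuclideanSpace ℝ (Fin 2)) ∈ convexHull ℝ {x, y, z}) :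
    2 * Real.pi / 3 ≤ InnerProductGeometry.angle x y ∨
    2 * Real.pi / 3 ≤ InnerProductGeometry.angle y z ∨
    2 * Real.pi / 3 ≤ InnerProductGeometry.angle z x := by
  obtain ⟨a, b, c, ha, hb, hc, habc, hsum⟩ :=
    exists_smul_add_smul_add_smul_eq_of_mem_convexHull_triple h0
  have hne : a • x ≠ 0 ∨ b • y ≠ 0 ∨ c • z ≠ 0 := by
    by_contra! ⟨hax, hby, hcz⟩
    simp only [smul_eq_zero, hx, hy, hz, or_false] at hax hby hcz
    linarith
  rcases exists_two_pi_div_three_le_angle_of_add_add_eq_zero hsum hne with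
    ⟨hax, hby, h⟩ | ⟨hby, hcz, h⟩ | ⟨hcz, hax, h⟩
  · exact Or.inl (angle_smul_smul_of_nonneg ha hb hax hby ▸ h)
  · exact Or.inr (Or.inl (angle_smul_smul_of_nonneg hb hc hby hcz ▸ h))
  · exact Or.inr (Or.inr (angle_smul_smul_of_nonneg hc ha hcz hax ▸ h))

/-- If `x, y, z` are nonzero points of the plane forming a triangle whose convex hull
contains the origin, then one of the three angles they subtend at the origin is at
least `2π/3`. -/
theorem exists_angle_ge_two_pi_div_three
    (x y z : EuclideanSpace ℝ (Fin 2))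
    (hx : x ≠ 0) (hy : y ≠ 0) (hz : z ≠ 0)
    (hindep : AffineIndependent ℝ ![x, y, z])
    (h0 : (0 : EuclideanSpace ℝ (Fin 2)) ∈ convexHull ℝ {x, y, z}) :
    2 * Real.pi / 3 ≤ InnerProductGeometry.angle x y ∨
    2 * Real.pi / 3 ≤ InnerProductGeometry.angle y z ∨
    2 * Real.pi / 3 ≤ InnerProductGeometry.angle z x :=
  exists_angle_ge_two_pi_div_three_general x y z hx hy hz h0
end

section
/- If A ⊂ ℝ^d is an infinite set, then for every θ < π there exist three points x, y, z ∈ A (with x ≠ y, z ≠ y) such that the angle ∠xyz exceeds θ. Equivalently, any set A with ∠A ≤ θ < π is finite. -/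
/-!
An infinite set either accumulates at a point `q` or is unbounded; in the second case put
`q = 0`. By compactness of the unit sphere, the directions `(a - q) / ‖a - q‖` of the points
`a ∈ A` that approach `q` (resp. escape to infinity) cluster at a unit vector `v`. Picking three
such points `x, y, z` with direction near `v` and distances to `q` decreasing by a large factor
at each step, `x - y` points almost along `v` and `z - y` almost along `-v`, so `∠ x y z` is
almost `π`.
-/

open InnerProductGeometry Filter Topology Bornology Metric Real
open scoped EuclideanGeometry

variable {E : Type*} [NormedAddCommGroup E] [InnerProductSpace ℝ E]

lemma exists_pos_lt_angle_of_near_self_neg {v : E} (hv : v ≠ 0) {θ : ℝ} (hθ : θ < π) :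
    ∃ δ > 0, ∀ p w : E, ‖p - v‖ < δ → ‖w + v‖ < δ → p ≠ 0 ∧ w ≠ 0 ∧ θ < angle p w := by
  have hangle : ∀ᶠ pw : E × E in 𝓝 (v, -v), θ < angle pw.1 pw.2 :=
    (continuousAt_angle (x := (v, -v)) hv (neg_ne_zero.2 hv)).eventually
      (lt_mem_nhds (show θ < angle v (-v) by rwa [angle_self_neg_of_nonzero hv]))
  have hfst : ∀ᶠ pw : E × E in 𝓝 (v, -v), pw.1 ≠ 0 := continuousAt_fst.eventually_ne hv
  have hsnd : ∀ᶠ pw : E × E in 𝓝 (v, -v), pw.2 ≠ 0 :=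
    continuousAt_snd.eventually_ne (neg_ne_zero.2 hv)
  obtain ⟨δ, hδ, h⟩ := Metric.eventually_nhds_iff.1 (hfst.and (hsnd.and hangle))
  refine ⟨δ, hδ, fun p w hp hw => h (y := (p, w)) ?_⟩
  rw [Prod.dist_eq, max_lt_iff, dist_eq_norm, dist_eq_norm, sub_neg_eq_add]
  exact ⟨hp, hw⟩

lemma norm_inv_norm_smul_sub_sub_lt {p m q v : E} {η : ℝ}
    (hp : ‖‖p - q‖⁻¹ • (p - q) - v‖ < η) (hm : ‖m - q‖ < ‖p - q‖ * η) :
    ‖‖p - q‖⁻¹ • (p - m) - v‖ < 2 * η := by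
  have hpq : 0 < ‖p - q‖ := (norm_nonneg _).lt_of_ne fun h => by
    rw [← h, zero_mul] at hm
    exact (norm_nonneg _).not_gt hm
  calc ‖‖p - q‖⁻¹ • (p - m) - v‖
      = ‖(‖p - q‖⁻¹ • (p - q) - v) - ‖p - q‖⁻¹ • (m - q)‖ := by
        rw [smul_sub, smul_sub, smul_sub]; abel_nf
    _ ≤ ‖‖p - q‖⁻¹ • (p - q) - v‖ + ‖p - q‖⁻¹ * ‖m - q‖ :=
        (norm_sub_le _ _).trans_eq (by rw [norm_smul, norm_inv, norm_norm])
    _ < η + η := add_lt_add hp ((inv_mul_lt_iff₀ hpq).2 hm)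
    _ = 2 * η := (two_mul η).symm

/-- After rescaling by `‖x - q‖` and `‖y - q‖` respectively, `x - y` is close to `v` and `z - y`
is close to `-v`. -/
lemma exists_pos_lt_angle_of_scale_separated {v : E} (hv : v ≠ 0) {θ : ℝ} (hθ : θ < π) :
    ∃ η > 0, ∀ q x y z : E,
      ‖‖x - q‖⁻¹ • (x - q) - v‖ < η → ‖‖y - q‖⁻¹ • (y - q) - v‖ < η →
      ‖y - q‖ < ‖x - q‖ * η → ‖z - q‖ < ‖y - q‖ * η → x ≠ y ∧ z ≠ y ∧ θ < ∠ x y z := by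
  obtain ⟨δ, hδ, hnear⟩ := exists_pos_lt_angle_of_near_self_neg hv hθ
  refine ⟨δ / 2, by positivity, fun q x y z hx hy hxy hyz => ?_⟩
  have hxy' := norm_inv_norm_smul_sub_sub_lt hx hxy
  have hyz' := norm_inv_norm_smul_sub_sub_lt hy hyz
  rw [mul_div_cancel₀ _ two_ne_zero] at hxy' hyz'
  rw [norm_sub_rev, ← neg_add_eq_sub, ← smul_neg, neg_sub] at hyz'
  obtain ⟨hxy₀, hzy₀, hangle⟩ := hnear _ _ hxy' hyz'
  have hxq : 0 < ‖x - q‖⁻¹ := (smul_ne_zero_iff.1 hxy₀).1.lt_of_le' (by positivity)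
  have hyq : 0 < ‖y - q‖⁻¹ := (smul_ne_zero_iff.1 hzy₀).1.lt_of_le' (by positivity)
  refine ⟨sub_ne_zero.1 (smul_ne_zero_iff.1 hxy₀).2, sub_ne_zero.1 (smul_ne_zero_iff.1 hzy₀).2,
    ?_⟩
  rwa [EuclideanGeometry.angle, vsub_eq_sub, vsub_eq_sub, ← angle_smul_left_of_pos _ _ hxq,
    ← angle_smul_right_of_pos _ _ hyq]

lemma exists_norm_eq_one_mapClusterPt_direction [ProperSpace E] {F : Filter E} [F.NeBot] {q : E}
    (hq : ∀ᶠ a in F, a ≠ q) :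
    ∃ v : E, ‖v‖ = 1 ∧ MapClusterPt v F fun a => ‖a - q‖⁻¹ • (a - q) := by
  have hsphere : map (fun a => ‖a - q‖⁻¹ • (a - q)) F ≤ 𝓟 (sphere 0 1) := by
    rw [le_principal_iff, mem_map]
    filter_upwards [hq] with a ha
    simp [norm_smul, sub_ne_zero.2 ha]
  obtain ⟨v, hv, hcluster⟩ := isCompact_sphere (0 : E) 1 hsphere
  exact ⟨v, mem_sphere_zero_iff_norm.1 hv, hcluster⟩

variable [ProperSpace E] {A : Set E} {F : Filter E} [F.NeBot] {q : E} {θ : ℝ}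

lemma exists_lt_angle_of_tendsto_zero (hθ : θ < π) (hA : ∀ᶠ a in F, a ∈ A ∧ a ≠ q)
    (hr : Tendsto (fun a => ‖a - q‖) F (𝓝 0)) :
    ∃ x ∈ A, ∃ y ∈ A, ∃ z ∈ A, x ≠ y ∧ z ≠ y ∧ θ < ∠ x y z := by
  obtain ⟨v, hv, hdir⟩ := exists_norm_eq_one_mapClusterPt_direction (hA.mono fun _ h => h.2)
  obtain ⟨η, hη, hangle⟩ :=
    exists_pos_lt_angle_of_scale_separated (norm_ne_zero_iff.1 (hv ▸ one_ne_zero)) hθ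
  have hpick : ∀ ρ > 0,
      ∃ a ∈ A, 0 < ‖a - q‖ ∧ ‖a - q‖ < ρ ∧ ‖‖a - q‖⁻¹ • (a - q) - v‖ < η :=
    fun ρ hρ => ((mapClusterPt_iff_frequently.1 hdir _ (ball_mem_nhds v hη)).and_eventually
      (hA.and (hr.eventually (gt_mem_nhds hρ)))).exists.imp
      fun a ⟨ha, ⟨haA, haq⟩, hsmall⟩ =>
        ⟨haA, norm_pos_iff.2 (sub_ne_zero.2 haq), hsmall,
          by rwa [mem_ball, dist_eq_norm] at ha⟩
  obtain ⟨x, hxA, hxq, -, hx⟩ := hpick 1 one_pos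
  obtain ⟨y, hyA, hyq, hxy, hy⟩ := hpick (‖x - q‖ * η) (by positivity)
  obtain ⟨z, hzA, -, hyz, -⟩ := hpick (‖y - q‖ * η) (by positivity)
  exact ⟨x, hxA, y, hyA, z, hzA, hangle q x y z hx hy hxy hyz⟩

lemma exists_lt_angle_of_tendsto_atTop (hθ : θ < π) (hA : ∀ᶠ a in F, a ∈ A)
    (hr : Tendsto (fun a => ‖a - q‖) F atTop) :
    ∃ x ∈ A, ∃ y ∈ A, ∃ z ∈ A, x ≠ y ∧ z ≠ y ∧ θ < ∠ x y z := by
  obtain ⟨v, hv, hdir⟩ := exists_norm_eq_one_mapClusterPt_direction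
    ((hr.eventually_gt_atTop 0).mono fun _ h => sub_ne_zero.1 (norm_pos_iff.1 h))
  obtain ⟨η, hη, hangle⟩ :=
    exists_pos_lt_angle_of_scale_separated (norm_ne_zero_iff.1 (hv ▸ one_ne_zero)) hθ
  have hpick : ∀ R, ∃ a ∈ A, R < ‖a - q‖ ∧ ‖‖a - q‖⁻¹ • (a - q) - v‖ < η :=
    fun R => ((mapClusterPt_iff_frequently.1 hdir _ (ball_mem_nhds v hη)).and_eventually
      (hA.and (hr.eventually_gt_atTop R))).exists.imp
      fun a ⟨ha, haA, hlarge⟩ => ⟨haA, hlarge, by rwa [mem_ball, dist_eq_norm] at ha⟩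
  obtain ⟨z, hzA, -, -⟩ := hpick 0
  obtain ⟨y, hyA, hzy, hy⟩ := hpick (‖z - q‖ / η)
  obtain ⟨x, hxA, hyx, hx⟩ := hpick (‖y - q‖ / η)
  rw [div_lt_iff₀ hη] at hzy hyx
  exact ⟨x, hxA, y, hyA, z, hzA, hangle q x y z hx hy hyx hzy⟩

/-- An infinite subset of `ℝ^d` contains, for every `θ < π`, three points forming an angle
greater than `θ`: equivalently, any set with a maximal angle bound strictly below `π`
is finite. -/
theorem exists_large_angle_of_infinite
    (d : ℕ) (A : Set (EuclideanSpace ℝ (Fin d))) (hA : A.Infinite)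
    (θ : ℝ) (hθ : θ < Real.pi) :
    ∃ x ∈ A, ∃ y ∈ A, ∃ z ∈ A, x ≠ y ∧ z ≠ y ∧
      θ < EuclideanGeometry.angle x y z := by
  by_cases hbdd : IsBounded A
  · obtain ⟨q, -, hq⟩ :=
      hA.exists_accPt_of_subset_isCompact hbdd.isCompact_closure subset_closure
    have : (𝓝[≠] q ⊓ 𝓟 A).NeBot := hq
    have hr : Tendsto (fun a => ‖a - q‖) (𝓝[≠] q ⊓ 𝓟 A) (𝓝 0) :=
      tendsto_iff_norm_sub_tendsto_zero.1
        (tendsto_id.mono_left (inf_le_left.trans nhdsWithin_le_nhds))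
    refine exists_lt_angle_of_tendsto_zero hθ ?_ hr
    exact mem_of_superset (inter_mem_inf self_mem_nhdsWithin (mem_principal_self A))
      fun a ha => ⟨ha.2, ha.1⟩
  · have : (cobounded _ ⊓ 𝓟 A).NeBot := by
      simpa using notMem_iff_inf_principal_compl.1 (isBounded_def.not.1 hbdd)
    have hr : Tendsto (fun a => ‖a - 0‖) (cobounded _ ⊓ 𝓟 A) atTop := by
      simpa using tendsto_norm_cobounded_atTop.mono_left inf_le_left
    exact exists_lt_angle_of_tendsto_atTop hθ (mem_inf_of_right (mem_principal_self A)) hr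
end

section
/- For d ≥ 1 and η ∈ (0, π/2), define f_d(η) = (∫₀^π sin^{d-1}(t) dt)^{-1} · ∫₀^{π/2-η} sin^{d-1}(t) dt. Then f_d is strictly decreasing in η, and for fixed η, f_d(η) is strictly decreasing in d (for real d ≥ 1). -/
/-!
Write `c = d - 1` and `a = π/2 - η`. Monotonicity in `η` holds because `sin^c` is positive on
`(0, π)`. For monotonicity in `c`, the symmetry of `sin` about `π/2` gives
`∫₀^π sin^c = 2 (A c + B c)` with `A c = ∫₀^a sin^c` and `B c = ∫ₐ^{π/2} sin^c`, so
`f = A / (2 (A + B))` and it suffices that `A c₂ · B c₁ < A c₁ · B c₂` for `c₁ < c₂`.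
Since `sin` increases on `[0, π/2]`, the extra factor `sin^{c₂ - c₁}` is below
`γ = sin a ^ (c₂ - c₁)` on `(0, a)` and above it on `[a, π/2]`, whence
`A c₂ < γ · A c₁` and `γ · B c₁ ≤ B c₂`.
-/

open Real intervalIntegral MeasureTheory

lemma continuous_sin_rpow {c : ℝ} (hc : 0 ≤ c) : Continuous fun t : ℝ => sin t ^ c :=
  continuous_sin.rpow_const fun _ => Or.inr hc

lemma intervalIntegrable_sin_rpow {c : ℝ} (hc : 0 ≤ c) (a b : ℝ) :
    IntervalIntegrable (fun t : ℝ => sin t ^ c) volume a b :=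
  (continuous_sin_rpow hc).intervalIntegrable a b

lemma integral_sin_rpow_pos {c a b : ℝ} (hc : 0 ≤ c) (ha : 0 ≤ a) (hab : a < b) (hb : b ≤ π) :
    0 < ∫ t in a..b, sin t ^ c :=
  intervalIntegral_pos_of_pos_on (intervalIntegrable_sin_rpow hc a b)
    (fun _ ht => rpow_pos_of_pos (sin_pos_of_pos_of_lt_pi (ha.trans_lt ht.1) (ht.2.trans_le hb)) c)
    hab

lemma strictMonoOn_integral_sin_rpow {c : ℝ} (hc : 0 ≤ c) :
    StrictMonoOn (fun x => ∫ t in (0 : ℝ)..x, sin t ^ c) (Set.Icc 0 π) := by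
  intro x hx y hy hxy
  dsimp only
  rw [← integral_add_adjacent_intervals (intervalIntegrable_sin_rpow hc 0 x)
    (intervalIntegrable_sin_rpow hc x y)]
  linarith [integral_sin_rpow_pos hc hx.1 hxy hy.2]

lemma integral_sin_rpow_zero_pi {c : ℝ} (hc : 0 ≤ c) :
    ∫ t in (0 : ℝ)..π, sin t ^ c = 2 * ∫ t in (0 : ℝ)..π / 2, sin t ^ c := by
  have hsymm : ∫ t in π / 2..π, sin t ^ c = ∫ t in (0 : ℝ)..π / 2, sin t ^ c := by
    have h := integral_comp_sub_left (fun t => sin t ^ c) π (a := 0) (b := π / 2)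
    simp only [sin_pi_sub, sub_zero, show π - π / 2 = π / 2 by ring] at h
    exact h.symm
  rw [← integral_add_adjacent_intervals (intervalIntegrable_sin_rpow hc 0 (π / 2))
    (intervalIntegrable_sin_rpow hc (π / 2) π), hsymm]
  ring

section Comparison

variable {a c e : ℝ}

lemma integral_sin_rpow_add_lt (ha₀ : 0 < a) (ha : a ≤ π / 2) (hc : 0 ≤ c) (he : 0 < e) :
    ∫ t in (0 : ℝ)..a, sin t ^ (c + e) < sin a ^ e * ∫ t in (0 : ℝ)..a, sin t ^ c := by
  have hcont : Continuous fun t => sin a ^ e * sin t ^ c :=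
    continuous_const.mul (continuous_sin_rpow hc)
  have hcont' : Continuous fun t : ℝ => sin t ^ (c + e) := continuous_sin_rpow (by linarith)
  suffices h : 0 < ∫ t in (0 : ℝ)..a, (sin a ^ e * sin t ^ c - sin t ^ (c + e)) by
    rwa [integral_sub (hcont.intervalIntegrable 0 a) (hcont'.intervalIntegrable 0 a),
      intervalIntegral.integral_const_mul, sub_pos] at h
  refine intervalIntegral_pos_of_pos_on ((hcont.sub hcont').intervalIntegrable 0 a)
    (fun t ht => ?_) ha₀
  have hsin : 0 < sin t := sin_pos_of_pos_of_lt_pi ht.1 (by linarith [ht.2, pi_pos])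
  have hlt : sin t < sin a :=
    strictMonoOn_sin ⟨by linarith [ht.1, pi_pos], by linarith [ht.2]⟩
      ⟨by linarith [pi_pos], ha⟩ ht.2
  rw [rpow_add hsin, sub_pos, mul_comm]
  exact mul_lt_mul_of_pos_right (rpow_lt_rpow hsin.le hlt he) (rpow_pos_of_pos hsin c)

lemma mul_integral_sin_rpow_le_add (ha₀ : 0 ≤ a) (ha : a ≤ π / 2) (hc : 0 ≤ c) (he : 0 < e) :
    sin a ^ e * ∫ t in a..π / 2, sin t ^ c ≤ ∫ t in a..π / 2, sin t ^ (c + e) := by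
  rw [← intervalIntegral.integral_const_mul]
  refine integral_mono_on ha
    ((continuous_const.mul (continuous_sin_rpow hc)).intervalIntegrable _ _)
    (intervalIntegrable_sin_rpow (by linarith) _ _) fun t ht => ?_
  have hsin : 0 ≤ sin t :=
    sin_nonneg_of_nonneg_of_le_pi (ha₀.trans ht.1) (by linarith [ht.2, pi_pos])
  have hle : sin a ≤ sin t :=
    strictMonoOn_sin.monotoneOn ⟨by linarith [pi_pos], ha⟩
      ⟨by linarith [ht.1, pi_pos], ht.2⟩ ht.1
  rw [rpow_add' hsin (by linarith), mul_comm]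
  exact mul_le_mul_of_nonneg_left
    (rpow_le_rpow (sin_nonneg_of_nonneg_of_le_pi ha₀ (by linarith [pi_pos])) hle he.le)
    (rpow_nonneg hsin c)

end Comparison

lemma integral_sin_rpow_cross_lt {a c₁ c₂ : ℝ} (ha₀ : 0 < a) (ha : a < π / 2) (hc₁ : 0 ≤ c₁)
    (hc : c₁ < c₂) :
    (∫ t in (0 : ℝ)..a, sin t ^ c₂) * ∫ t in a..π / 2, sin t ^ c₁ <
      (∫ t in (0 : ℝ)..a, sin t ^ c₁) * ∫ t in a..π / 2, sin t ^ c₂ := by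
  have hB₁ : 0 < ∫ t in a..π / 2, sin t ^ c₁ :=
    integral_sin_rpow_pos hc₁ ha₀.le ha (by linarith [pi_pos])
  have hA₁ : 0 < ∫ t in (0 : ℝ)..a, sin t ^ c₁ :=
    integral_sin_rpow_pos hc₁ le_rfl ha₀ (by linarith [pi_pos])
  have he : 0 < c₂ - c₁ := sub_pos.2 hc
  have hA := integral_sin_rpow_add_lt ha₀ ha.le hc₁ he
  have hB := mul_integral_sin_rpow_le_add ha₀.le ha.le hc₁ he
  rw [add_sub_cancel] at hA hB
  calc (∫ t in (0 : ℝ)..a, sin t ^ c₂) * ∫ t in a..π / 2, sin t ^ c₁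
      < (sin a ^ (c₂ - c₁) * ∫ t in (0 : ℝ)..a, sin t ^ c₁) * ∫ t in a..π / 2, sin t ^ c₁ :=
        mul_lt_mul_of_pos_right hA hB₁
    _ = (∫ t in (0 : ℝ)..a, sin t ^ c₁) * (sin a ^ (c₂ - c₁) * ∫ t in a..π / 2, sin t ^ c₁) := by
        ring
    _ ≤ (∫ t in (0 : ℝ)..a, sin t ^ c₁) * ∫ t in a..π / 2, sin t ^ c₂ :=
        mul_le_mul_of_nonneg_left hB hA₁.le

lemma strictAntiOn_integral_sin_rpow_ratio {a : ℝ} (ha₀ : 0 < a) (ha : a < π / 2) :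
    StrictAntiOn (fun c : ℝ => (∫ t in (0 : ℝ)..π, sin t ^ c)⁻¹ * ∫ t in (0 : ℝ)..a, sin t ^ c)
      (Set.Ici (0 : ℝ)) := by
  intro c₁ (hc₁ : (0 : ℝ) ≤ c₁) c₂ (hc₂ : (0 : ℝ) ≤ c₂) hc
  have hsplit : ∀ c : ℝ, 0 ≤ c → ∫ t in (0 : ℝ)..π, sin t ^ c =
      2 * ((∫ t in (0 : ℝ)..a, sin t ^ c) + ∫ t in a..π / 2, sin t ^ c) := fun c hc => by
    rw [integral_sin_rpow_zero_pi hc, integral_add_adjacent_intervals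
      (intervalIntegrable_sin_rpow hc _ _) (intervalIntegrable_sin_rpow hc _ _)]
  have hpos : ∀ c : ℝ, 0 ≤ c → 0 < ∫ t in (0 : ℝ)..a, sin t ^ c ∧ 0 < ∫ t in a..π / 2, sin t ^ c :=
    fun c hc => ⟨integral_sin_rpow_pos hc le_rfl ha₀ (by linarith [pi_pos]),
      integral_sin_rpow_pos hc ha₀.le ha (by linarith [pi_pos])⟩
  obtain ⟨hA₁, hB₁⟩ := hpos c₁ hc₁
  obtain ⟨hA₂, hB₂⟩ := hpos c₂ hc₂
  simp only [hsplit c₁ hc₁, hsplit c₂ hc₂, inv_mul_eq_div]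
  rw [div_lt_div_iff₀ (by positivity) (by positivity)]
  nlinarith [integral_sin_rpow_cross_lt ha₀ ha hc₁ hc]

/-- The normalized-cap function
`f_d(η) = (∫₀^π sin^{d-1})⁻¹ ∫₀^{π/2-η} sin^{d-1}` is strictly decreasing in
`η ∈ (0, π/2)` for each real `d ≥ 1`, and strictly decreasing in real `d ≥ 1`
for each fixed `η ∈ (0, π/2)`. -/
theorem f_strictAnti_in_eta_and_d :
    (∀ d : ℝ, 1 ≤ d →
      StrictAntiOn (fun η : ℝ =>
        (∫ t in (0:ℝ)..Real.pi, Real.sin t ^ (d - 1))⁻¹ *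
          ∫ t in (0:ℝ)..(Real.pi / 2 - η), Real.sin t ^ (d - 1))
        (Set.Ioo 0 (Real.pi / 2))) ∧
    (∀ η : ℝ, η ∈ Set.Ioo 0 (Real.pi / 2) →
      StrictAntiOn (fun d : ℝ =>
        (∫ t in (0:ℝ)..Real.pi, Real.sin t ^ (d - 1))⁻¹ *
          ∫ t in (0:ℝ)..(Real.pi / 2 - η), Real.sin t ^ (d - 1))
        (Set.Ici (1:ℝ))) := by
  constructor
  · intro d hd η₁ hη₁ η₂ hη₂ hη
    have hc : 0 ≤ d - 1 := by linarith
    have hx : π / 2 - η₂ < π / 2 - η₁ := by linarith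
    refine mul_lt_mul_of_pos_left ?_ (inv_pos.2 (integral_sin_rpow_pos hc le_rfl pi_pos le_rfl))
    exact strictMonoOn_integral_sin_rpow hc ⟨by linarith [hη₂.2], by linarith [hη₂.1, pi_pos]⟩
      ⟨by linarith [hη₁.2], by linarith [hη₁.1, pi_pos]⟩ hx
  · intro η hη d₁ (hd₁ : 1 ≤ d₁) d₂ (hd₂ : 1 ≤ d₂) hd
    exact strictAntiOn_integral_sin_rpow_ratio (a := π / 2 - η) (by linarith [hη.2])
      (by linarith [hη.1]) (Set.mem_Ici.2 (by linarith : (0 : ℝ) ≤ d₁ - 1))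
      (Set.mem_Ici.2 (by linarith : (0 : ℝ) ≤ d₂ - 1)) (by linarith)
end

section
/- Let d ≥ 1, θ_d = arccos(-1/d), and θ ∈ (0, θ_d). Suppose V = {v₁,...,v_n} ⊂ ℝ^{d+1} is the vertex set of a convex polytope with nonempty interior and ∠V ≤ θ. Then there exist unit vectors u₁,...,u_n such that conv(V) ⊆ ⋂ᵢ (vᵢ + C_{uᵢ,η}), where η = arcsin(sin(θ/2)/sin(θ_d/2)) and C_{u,η} = {x ∈ ℝ^{d+1} : u·x ≥ |u||x| cos η} is the cone of half-angle η around u. -/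
/-!
Translate the vertex `v` to the origin and look at the unit directions `p_x = (x - v)/‖x - v‖`,
`x ∈ V \ {v}`. Since `∠x v z ≤ θ`, their pairwise chordal distances satisfy
`‖p_x - p_z‖² ≤ 2 - 2 cos θ`, and since `v` is a vertex they lie in an open hemisphere.
A spherical Jung theorem puts them in a cap of angular radius `η` around some unit `u`:
the centre `c` of their smallest enclosing ball is a convex combination of the contact points,
which lie on a hyperplane orthogonal to `c`; Carathéodory leaves at most `d + 1` of them, and
Jung's computation `∑ λᵢλⱼ‖zᵢ - zⱼ‖² = 2r²` gives `r² ≤ (1 - cos θ) d/(d + 1) = sin² η`, while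
`‖c‖² = 1 - r²` and `⟪c, p⟫ ≥ ‖c‖²` for every direction `p`. The cone `v + C_{u,η}` is convex
and contains `V`, hence the polytope.
-/

open scoped RealInnerProductSpace

open Filter Topology

variable {E : Type*} [NormedAddCommGroup E] [InnerProductSpace ℝ E]

lemma exists_inner_sub_pos_of_notMem_convexHull [CompleteSpace E] {s : Set E} (hs : s.Finite)
    {x : E} (hx : x ∉ convexHull ℝ s) : ∃ w : E, ∀ p ∈ s, 0 < ⟪w, p - x⟫ := by
  obtain ⟨f, a, hfx, hfs⟩ := geometric_hahn_banach_point_closed (convex_convexHull ℝ s)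
    (hs.isClosed_convexHull ℝ) hx
  refine ⟨(InnerProductSpace.toDual ℝ E).symm f, fun p hp => ?_⟩
  rw [InnerProductSpace.toDual_symm_apply, map_sub, sub_pos]
  exact hfx.trans (hfs p (subset_convexHull ℝ s hp))

lemma eventually_dist_add_smul_lt {p c w : E} (h : 0 < ⟪w, p - c⟫) :
    ∀ᶠ t in 𝓝[>] (0 : ℝ), dist p (c + t • w) < dist p c := by
  have hsmall : ∀ᶠ t in 𝓝 (0 : ℝ), t * ‖w‖ ^ 2 < 2 * ⟪w, p - c⟫ :=
    (continuous_id.mul continuous_const).tendsto' 0 0 (zero_mul _) |>.eventually_lt_const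
      (by linarith)
  filter_upwards [self_mem_nhdsWithin, nhdsWithin_le_nhds hsmall] with t (ht : 0 < t) hts
  have hexpand : dist p (c + t • w) ^ 2 = dist p c ^ 2 - t * (2 * ⟪w, p - c⟫ - t * ‖w‖ ^ 2) := by
    rw [dist_eq_norm, dist_eq_norm, show p - (c + t • w) = (p - c) - t • w by abel,
      norm_sub_sq_real, real_inner_smul_right, real_inner_comm, norm_smul, Real.norm_eq_abs,
      mul_pow, sq_abs]
    ring
  refine lt_of_pow_lt_pow_left₀ 2 dist_nonneg ?_
  rw [hexpand]
  nlinarith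

lemma exists_forall_dist_le_mem_convexHull [FiniteDimensional ℝ E] (P : Finset E)
    (hP : P.Nonempty) : ∃ (c : E) (r : ℝ),
      (∀ p ∈ P, dist p c ≤ r) ∧ c ∈ convexHull ℝ {p | p ∈ P ∧ dist p c = r} := by
  set f : E → ℝ := fun c => P.sup' hP (dist · c)
  have hf : Continuous f := continuous_iff_continuousAt.2 fun x =>
    ContinuousAt.finset_sup'_apply hP fun p _ => (continuous_const.dist continuous_id).continuousAt
  obtain ⟨p₀, hp₀⟩ := id hP
  have hlim : Tendsto f (cocompact E) atTop :=
    tendsto_atTop_mono (fun c => P.le_sup' (dist · c) hp₀) (tendsto_dist_left_cocompact_atTop p₀)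
  obtain ⟨c, hc⟩ := hf.exists_forall_le hlim
  refine ⟨c, f c, fun p hp => P.le_sup' (dist · c) hp, ?_⟩
  -- Otherwise a direction `w` separating `c` from the farthest points lets `c + t • w` do better.
  by_contra hnot
  obtain ⟨w, hw⟩ := exists_inner_sub_pos_of_notMem_convexHull
    (P.finite_toSet.subset fun p hp => hp.1) hnot
  have hmove : ∀ᶠ t in 𝓝[>] (0 : ℝ), ∀ p ∈ P, dist p (c + t • w) < f c := by
    refine (eventually_all_finset P).2 fun p hp => ?_
    rcases (P.le_sup' (dist · c) hp).lt_or_eq with hlt | heq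
    · have hcont : Continuous fun t : ℝ => dist p (c + t • w) := by fun_prop
      exact nhdsWithin_le_nhds <| (hcont.tendsto' 0 _ (by simp)).eventually_lt_const hlt
    · exact (eventually_dist_add_smul_lt (hw p ⟨hp, heq⟩)).mono fun t ht => ht.trans_eq heq
  obtain ⟨t, ht⟩ := hmove.exists
  exact (hc (c + t • w)).not_gt ((P.sup'_lt_iff hP).2 ht)

lemma sum_sum_mul_norm_sub_sq {ι : Type*} [Fintype ι] (z : ι → E) {w : ι → ℝ}
    (hw : ∑ i, w i = 1) {c : E} (hc : ∑ i, w i • z i = c) :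
    ∑ i, ∑ j, w i * w j * ‖z i - z j‖ ^ 2 = 2 * ∑ i, w i * ‖z i - c‖ ^ 2 := by
  have hbary : ∑ i, w i • (z i - c) = 0 := by
    simp only [smul_sub, Finset.sum_sub_distrib, ← Finset.sum_smul, hw, hc, one_smul, sub_self]
  have hcross : ∑ i, w i * ∑ j, w j * ⟪z j - c, z i - c⟫ = 0 := by
    have := congrArg (fun y => ⟪y, y⟫) hbary
    simpa only [sum_inner, inner_sum, real_inner_smul_left, real_inner_smul_right, inner_zero_left,
      Finset.mul_sum] using this
  calc ∑ i, ∑ j, w i * w j * ‖z i - z j‖ ^ 2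
      = ∑ i, ∑ j, (w j * (w i * ‖z i - c‖ ^ 2) + w i * (w j * ‖z j - c‖ ^ 2)
          - 2 * (w i * (w j * ⟪z j - c, z i - c⟫))) := by
        refine Finset.sum_congr rfl fun i _ => Finset.sum_congr rfl fun j _ => ?_
        rw [show z i - z j = (z i - c) - (z j - c) by abel, norm_sub_sq_real,
          real_inner_comm (z j - c)]
        ring
    _ = 2 * ∑ i, w i * ‖z i - c‖ ^ 2 := by
        simp only [Finset.sum_sub_distrib, Finset.sum_add_distrib, ← Finset.sum_mul,
          ← Finset.mul_sum, hw, hcross]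
        ring

lemma two_mul_sq_le_of_sum_smul_eq {ι : Type*} [Fintype ι] {z : ι → E} {w : ι → ℝ}
    (hw0 : ∀ i, 0 ≤ w i) (hw1 : ∑ i, w i = 1) {c : E} (hc : ∑ i, w i • z i = c) {r D2 : ℝ}
    (hr : ∀ i, ‖z i - c‖ = r) (hD : ∀ i j, ‖z i - z j‖ ^ 2 ≤ D2) :
    2 * r ^ 2 ≤ D2 * (1 - 1 / Fintype.card ι) := by
  classical
  have hne : Nonempty ι := by
    by_contra h
    simp [not_nonempty_iff.1 h] at hw1
  have hD2 : 0 ≤ D2 := by simpa using hD (Classical.arbitrary ι) (Classical.arbitrary ι)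
  have hvar : ∑ i, ∑ j, w i * w j * ‖z i - z j‖ ^ 2 = 2 * r ^ 2 := by
    simp only [sum_sum_mul_norm_sub_sq z hw1 hc, hr, ← Finset.sum_mul, hw1, one_mul]
  have hoff : ∑ i, ∑ j, w i * w j * ‖z i - z j‖ ^ 2 ≤ D2 * (1 - ∑ i, w i ^ 2) := by
    calc ∑ i, ∑ j, w i * w j * ‖z i - z j‖ ^ 2
        ≤ ∑ i, ∑ j, (D2 * (w i * w j) - if i = j then D2 * w i ^ 2 else 0) := by
          refine Finset.sum_le_sum fun i _ => Finset.sum_le_sum fun j _ => ?_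
          split_ifs with hij
          · subst hij
            simp [sq]
          · nlinarith [hD i j, mul_nonneg (hw0 i) (hw0 j)]
      _ = D2 * (1 - ∑ i, w i ^ 2) := by
          simp only [Finset.sum_sub_distrib, Finset.sum_ite_eq, Finset.mem_univ, if_true,
            ← Finset.mul_sum, ← Finset.sum_mul, hw1, ← sq]
          ring
  have hcs : 1 / (Fintype.card ι : ℝ) ≤ ∑ i, w i ^ 2 := by
    have := sq_sum_le_card_mul_sum_sq (s := Finset.univ) (f := w)
    rw [hw1, Finset.card_univ, one_pow] at this
    rwa [div_le_iff₀' (by exact_mod_cast Fintype.card_pos)]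
  nlinarith

lemma AffineIndependent.card_le_finrank_of_inner_eq [FiniteDimensional ℝ E] {ι : Type*}
    [Fintype ι] {z : ι → E} (hz : AffineIndependent ℝ z) {c : E} (hc : c ≠ 0) {β : ℝ}
    (hβ : ∀ i, ⟪c, z i⟫ = β) : Fintype.card ι ≤ Module.finrank ℝ E := by
  have hspan : vectorSpan ℝ (Set.range z) ≤ (ℝ ∙ c)ᗮ := by
    rw [vectorSpan_def, Submodule.span_le]
    rintro _ ⟨_, ⟨i, rfl⟩, _, ⟨j, rfl⟩, rfl⟩
    rw [SetLike.mem_coe, Submodule.mem_orthogonal_singleton_iff_inner_right]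
    change ⟪c, z i - z j⟫ = 0
    rw [inner_sub_right, hβ, hβ, sub_self]
  have hsum := (ℝ ∙ c).finrank_add_finrank_orthogonal
  rw [finrank_span_singleton hc] at hsum
  have := hz.card_le_finrank_succ
  have := Submodule.finrank_mono hspan
  omega

lemma exists_norm_eq_one_forall_le_inner [FiniteDimensional ℝ E] [Nontrivial E] (P : Finset E)
    (hunit : ∀ p ∈ P, ‖p‖ = 1) (h0 : (0 : E) ∉ convexHull ℝ (P : Set E)) {D2 : ℝ}
    (hD : ∀ p ∈ P, ∀ q ∈ P, ‖p - q‖ ^ 2 ≤ D2) :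
    ∃ u : E, ‖u‖ = 1 ∧
      ∀ p ∈ P, √(1 - D2 * (1 - 1 / Module.finrank ℝ E) / 2) ≤ ⟪u, p⟫ := by
  rcases P.eq_empty_or_nonempty with rfl | hP
  · obtain ⟨u, hu⟩ := exists_norm_eq E zero_le_one
    exact ⟨u, hu, by simp⟩
  obtain ⟨c, r, hball, hconv⟩ := exists_forall_dist_le_mem_convexHull P hP
  have hplane : ∀ p ∈ {p | p ∈ P ∧ dist p c = r}, ⟪c, p⟫ = (1 + ‖c‖ ^ 2 - r ^ 2) / 2 := by
    rintro p ⟨hp, hpc⟩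
    have := norm_sub_sq_real p c
    rw [← dist_eq_norm, hpc, hunit p hp, real_inner_comm] at this
    linarith
  have hc2 : ‖c‖ ^ 2 = 1 - r ^ 2 := by
    have hcc : ⟪c, c⟫ = (1 + ‖c‖ ^ 2 - r ^ 2) / 2 :=
      convexHull_min hplane (convex_hyperplane (innerₗ E c).isLinear _) hconv
    rw [real_inner_self_eq_norm_sq] at hcc
    linarith
  have hc0 : c ≠ 0 := by
    rintro rfl
    exact h0 (convexHull_mono (fun p hp => hp.1) hconv)
  obtain ⟨ι, _, z, w, hzS, hz, hw0, hw1, hwz⟩ := eq_pos_convex_span_of_mem_convexHull hconv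
  have hcard : Fintype.card ι ≤ Module.finrank ℝ E :=
    hz.card_le_finrank_of_inner_eq hc0 fun i => hplane _ (hzS ⟨i, rfl⟩)
  have hjung : 2 * r ^ 2 ≤ D2 * (1 - 1 / Fintype.card ι) :=
    two_mul_sq_le_of_sum_smul_eq (fun i => (hw0 i).le) hw1 hwz
      (fun i => by rw [← dist_eq_norm, (hzS ⟨i, rfl⟩).2])
      (fun i j => hD _ (hzS ⟨i, rfl⟩).1 _ (hzS ⟨j, rfl⟩).1)
  have hD2 : 0 ≤ D2 := by
    obtain ⟨p, hp⟩ := hP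
    simpa using hD p hp p hp
  have hcardpos : (0 : ℝ) < Fintype.card ι := by
    have : Nonempty ι := by
      by_contra h
      simp [not_nonempty_iff.1 h] at hw1
    exact_mod_cast Fintype.card_pos
  have hr2 : 2 * r ^ 2 ≤ D2 * (1 - 1 / Module.finrank ℝ E) := by
    refine hjung.trans (mul_le_mul_of_nonneg_left ?_ hD2)
    gcongr
  refine ⟨‖c‖⁻¹ • c, norm_smul_inv_norm hc0, fun p hp => ?_⟩
  have hcp : ‖c‖ ^ 2 ≤ ⟪c, p⟫ := by
    have := norm_sub_sq_real p c
    rw [← dist_eq_norm, hunit p hp, real_inner_comm] at this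
    nlinarith [hball p hp, dist_nonneg (x := p) (y := c)]
  have hcn : 0 < ‖c‖ := norm_pos_iff.2 hc0
  calc √(1 - D2 * (1 - 1 / Module.finrank ℝ E) / 2) ≤ √(‖c‖ ^ 2) :=
        Real.sqrt_le_sqrt (by linarith)
    _ = ‖c‖ := Real.sqrt_sq hcn.le
    _ ≤ ⟪‖c‖⁻¹ • c, p⟫ := by
        rwa [real_inner_smul_left, le_inv_mul_iff₀ hcn, ← sq]

lemma zero_notMem_convexHull_of_inner_pos {s : Set E} {ω : E} (h : ∀ p ∈ s, 0 < ⟪ω, p⟫) :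
    (0 : E) ∉ convexHull ℝ s := fun h0 => by
  have : 0 < ⟪ω, 0⟫ := convexHull_min h (convex_halfSpace_gt (innerₗ E ω).isLinear 0) h0
  simp at this

lemma convex_setOf_norm_sub_mul_le_inner (u v : E) {κ : ℝ} (hκ : 0 ≤ κ) :
    Convex ℝ {x : E | ‖x - v‖ * κ ≤ ⟪u, x - v⟫} := by
  intro x hx y hy a b ha hb hab
  have hsub : a • x + b • y - v = a • (x - v) + b • (y - v) := by
    calc a • x + b • y - v = a • x + b • y - (a + b) • v := by rw [hab, one_smul]
      _ = a • (x - v) + b • (y - v) := by module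
  simp only [Set.mem_ofPred_eq, hsub, inner_add_right, real_inner_smul_right] at hx hy ⊢
  calc ‖a • (x - v) + b • (y - v)‖ * κ ≤ (a * ‖x - v‖ + b * ‖y - v‖) * κ := by
        gcongr
        refine (norm_add_le _ _).trans_eq ?_
        rw [norm_smul_of_nonneg ha, norm_smul_of_nonneg hb]
    _ ≤ a * ⟪u, x - v⟫ + b * ⟪u, y - v⟫ := by nlinarith

open InnerProductGeometry in
lemma norm_normalize_sub_normalize_sq_le {x y : E} (hx : x ≠ 0) (hy : y ≠ 0) {θ : ℝ}
    (hangle : angle x y ≤ θ) (hθ : θ ≤ Real.pi) :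
    ‖NormedSpace.normalize x - NormedSpace.normalize y‖ ^ 2 ≤ 2 - 2 * Real.cos θ := by
  rw [sq, norm_sub_sq_eq_norm_sq_add_norm_sq_sub_two_mul_norm_mul_norm_mul_cos_angle,
    NormedSpace.norm_normalize_eq_one_iff.2 hx, NormedSpace.norm_normalize_eq_one_iff.2 hy,
    angle_normalize_left, angle_normalize_right]
  have := Real.cos_le_cos_of_nonneg_of_le_pi (angle_nonneg x y) hθ hangle
  linarith

lemma Real.cos_arcsin_sin_half_div_sin_half_arccos {d : ℕ} (hd : 1 ≤ d) (θ : ℝ) :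
    Real.cos (Real.arcsin (Real.sin (θ / 2) / Real.sin (Real.arccos (-(1 / (d : ℝ))) / 2))) =
      √(1 - (2 - 2 * Real.cos θ) * (1 - 1 / ((d + 1 : ℕ) : ℝ)) / 2) := by
  have hd' : (1 : ℝ) ≤ d := by exact_mod_cast hd
  have hcos : Real.cos (Real.arccos (-(1 / (d : ℝ)))) = -(1 / d) :=
    Real.cos_arccos (by rw [neg_le_neg_iff, div_le_one₀ (by positivity)]; exact hd')
      (by have : 0 ≤ 1 / (d : ℝ) := by positivity
          linarith)
  rw [Real.cos_arcsin, div_pow, Real.sin_sq_eq_half_sub, Real.sin_sq_eq_half_sub,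
    mul_div_cancel₀ _ two_ne_zero, mul_div_cancel₀ _ two_ne_zero, hcos]
  congr 1
  push_cast
  field_simp
  ring

lemma exists_forall_mem_convexHull_norm_sub_mul_le_inner [FiniteDimensional ℝ E] [Nontrivial E]
    {V : Finset E} {v : E} (hvert : v ∉ convexHull ℝ ((V : Set E) \ {v})) {θ : ℝ}
    (hθ : θ ≤ Real.pi)
    (hang : ∀ x ∈ V, ∀ z ∈ V, x ≠ v → z ≠ v → EuclideanGeometry.angle x v z ≤ θ) :
    ∃ u : E, ‖u‖ = 1 ∧ ∀ x ∈ convexHull ℝ (V : Set E),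
      ‖x - v‖ * √(1 - (2 - 2 * Real.cos θ) * (1 - 1 / Module.finrank ℝ E) / 2) ≤ ⟪u, x - v⟫ := by
  classical
  obtain ⟨ω, hω⟩ := exists_inner_sub_pos_of_notMem_convexHull V.finite_toSet.sdiff hvert
  set P := (V.erase v).image fun x => NormedSpace.normalize (x - v)
  have hunit : ∀ p ∈ P, ‖p‖ = 1 := by
    simp only [P, Finset.forall_mem_image, Finset.mem_erase]
    exact fun x ⟨hxv, _⟩ => NormedSpace.norm_normalize_eq_one_iff.2 (sub_ne_zero.2 hxv)
  have h0 : (0 : E) ∉ convexHull ℝ (P : Set E) := by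
    refine zero_notMem_convexHull_of_inner_pos (ω := ω) ?_
    simp only [P, Finset.coe_image, Set.forall_mem_image, Finset.coe_erase, Set.mem_sdiff]
    intro x hx
    rw [NormedSpace.normalize, real_inner_smul_right]
    exact mul_pos (inv_pos.2 (norm_pos_iff.2 (sub_ne_zero.2 hx.2))) (hω x hx)
  have hD : ∀ p ∈ P, ∀ q ∈ P, ‖p - q‖ ^ 2 ≤ 2 - 2 * Real.cos θ := by
    simp only [P, Finset.forall_mem_image, Finset.mem_erase]
    intro x ⟨hxv, hx⟩ z ⟨hzv, hz⟩
    exact norm_normalize_sub_normalize_sq_le (sub_ne_zero.2 hxv) (sub_ne_zero.2 hzv)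
      (hang x hx z hz hxv hzv) hθ
  obtain ⟨u, hu, hcap⟩ := exists_norm_eq_one_forall_le_inner P hunit h0 hD
  refine ⟨u, hu, fun x hx => convexHull_min (fun y hy => ?_)
    (convex_setOf_norm_sub_mul_le_inner u v (Real.sqrt_nonneg _)) hx⟩
  rcases eq_or_ne y v with rfl | hyv
  · simp
  · show ‖y - v‖ * _ ≤ _
    have := hcap _ (Finset.mem_image_of_mem _ (Finset.mem_erase.2 ⟨hyv, hy⟩))
    rw [← NormedSpace.norm_smul_normalize (y - v), real_inner_smul_right, norm_smul, norm_norm,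
      NormedSpace.norm_normalize_eq_one_iff.2 (sub_ne_zero.2 hyv), mul_one]
    exact mul_le_mul_of_nonneg_left this (norm_nonneg _)

theorem polytope_subset_cones_general
    (d : ℕ) (hd : 1 ≤ d)
    (θ : ℝ) (hθ : θ < Real.arccos (-(1 / (d : ℝ))))
    (V : Finset (EuclideanSpace ℝ (Fin (d + 1))))
    (hvert : ∀ v ∈ V, v ∉ convexHull ℝ ((V : Set (EuclideanSpace ℝ (Fin (d + 1)))) \ {v}))
    (hang : ∀ x ∈ V, ∀ y ∈ V, ∀ z ∈ V, x ≠ y → z ≠ y →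
      EuclideanGeometry.angle x y z ≤ θ) :
    ∀ v ∈ V, ∃ u : EuclideanSpace ℝ (Fin (d + 1)), ‖u‖ = 1 ∧
      ∀ x ∈ convexHull ℝ (V : Set (EuclideanSpace ℝ (Fin (d + 1)))),
        ‖x - v‖ * Real.cos (Real.arcsin
            (Real.sin (θ / 2) / Real.sin (Real.arccos (-(1 / (d : ℝ))) / 2)))
          ≤ ⟪u, x - v⟫ := by
  intro v hv
  obtain ⟨u, hu, hcone⟩ := exists_forall_mem_convexHull_norm_sub_mul_le_inner (hvert v hv)
    (hθ.le.trans (Real.arccos_le_pi _)) fun x hx z hz => hang x hx v hv z hz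
  rw [finrank_euclideanSpace_fin, ← Real.cos_arcsin_sin_half_div_sin_half_arccos hd] at hcone
  exact ⟨u, hu, hcone⟩

/-- If `V` is the vertex set of a convex polytope in `ℝ^{d+1}` with nonempty interior,
and every angle formed by points of `V` is at most `θ < θ_d = arccos(-1/d)`, then each
vertex `v` admits a unit vector `u` such that the whole polytope lies in the cone
`v + C_{u,η}` of half-angle `η = arcsin(sin(θ/2)/sin(θ_d/2))` with vertex `v`. -/
theorem polytope_subset_cones
    (d : ℕ) (hd : 1 ≤ d)
    (θ : ℝ) (hθ0 : 0 < θ) (hθ : θ < Real.arccos (-(1 / (d : ℝ))))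
    (V : Finset (EuclideanSpace ℝ (Fin (d + 1))))
    (hint : (interior (convexHull ℝ (V : Set (EuclideanSpace ℝ (Fin (d + 1)))))).Nonempty)
    (hvert : ∀ v ∈ V, v ∉ convexHull ℝ ((V : Set (EuclideanSpace ℝ (Fin (d + 1)))) \ {v}))
    (hang : ∀ x ∈ V, ∀ y ∈ V, ∀ z ∈ V, x ≠ y → z ≠ y →
      EuclideanGeometry.angle x y z ≤ θ) :
    ∀ v ∈ V, ∃ u : EuclideanSpace ℝ (Fin (d + 1)), ‖u‖ = 1 ∧
      ∀ x ∈ convexHull ℝ (V : Set (EuclideanSpace ℝ (Fin (d + 1)))),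
        ‖x - v‖ * Real.cos (Real.arcsin
            (Real.sin (θ / 2) / Real.sin (Real.arccos (-(1 / (d : ℝ))) / 2)))
          ≤ ⟪u, x - v⟫ :=
  polytope_subset_cones_general d hd θ hθ V hvert hang
end

section
/- Let K ⊂ ℝ^{d+1} be a convex polytope with vertices v₁,...,v_n and nonempty interior. For each i let fᵢ be the normalized (d-dimensional Hausdorff) measure of the set {x ∈ S^d : (x) · (z - vᵢ) ≤ 0 for all z ∈ K}, the fraction of the sphere occupied by outer normals at vᵢ. Then Σᵢ fᵢ = 1. -/
/-!
Every unit vector `x` is an outer normal of `K = conv V` at a point of `V` maximising `⟪x, ·⟫`,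
so the sets of unit outer normals at the points of `V` cover the sphere. Those at two distinct
points `v ≠ w` meet only inside the great sphere `x ⊥ w - v`, which is `μH[d]`-null because it is
isometric to a sphere in a `d`-dimensional space, where `μH[d]` is an additive Haar measure.
Hence the measures add up to `μH[d] (sphere 0 1)`, which is positive (orthogonal projection onto a
hyperplane is `1`-Lipschitz and maps the sphere onto a unit ball) and finite (by compactness the
sphere is covered by finitely many caps, each a Lipschitz radial image of a bounded piece of a
hyperplane).
-/

open scoped RealInnerProductSpace MeasureTheory ENNReal NNReal
open MeasureTheory Metric Set Module

theorem lipschitzOnWith_inv_norm_smul {F : Type*} [NormedAddCommGroup F] [NormedSpace ℝ F]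
    {r : ℝ≥0} (hr : 0 < r) :
    LipschitzOnWith (2 / r) (fun x : F => ‖x‖⁻¹ • x) {x | (r : ℝ) ≤ ‖x‖} := by
  refine LipschitzOnWith.of_dist_le_mul fun x hx y hy => ?_
  have hx0 : 0 < ‖x‖ := (NNReal.coe_pos.mpr hr).trans_le hx
  have hy0 : 0 < ‖y‖ := (NNReal.coe_pos.mpr hr).trans_le hy
  have hsplit : ‖x‖⁻¹ • x - ‖y‖⁻¹ • y = ‖x‖⁻¹ • (x - y) + (‖x‖⁻¹ - ‖y‖⁻¹) • y := by module
  have hcorr : ‖(‖x‖⁻¹ - ‖y‖⁻¹) • y‖ ≤ ‖x‖⁻¹ * ‖x - y‖ := by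
    rw [norm_smul, Real.norm_eq_abs, inv_sub_inv hx0.ne' hy0.ne', abs_div, abs_mul,
      abs_of_pos hx0, abs_of_pos hy0, div_mul_eq_mul_div, mul_div_mul_right _ _ hy0.ne',
      inv_mul_eq_div]
    exact div_le_div_of_nonneg_right (abs_norm_sub_norm_le y x |>.trans_eq (norm_sub_rev y x))
      hx0.le
  rw [dist_eq_norm, dist_eq_norm, hsplit, NNReal.coe_div, NNReal.coe_two]
  calc ‖‖x‖⁻¹ • (x - y) + (‖x‖⁻¹ - ‖y‖⁻¹) • y‖
      ≤ ‖x‖⁻¹ * ‖x - y‖ + ‖x‖⁻¹ * ‖x - y‖ := by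
        refine (norm_add_le _ _).trans (add_le_add ?_ hcorr)
        rw [norm_smul, Real.norm_eq_abs, abs_inv, abs_of_pos hx0]
    _ = 2 / ‖x‖ * ‖x - y‖ := by ring
    _ ≤ 2 / r * ‖x - y‖ := by gcongr; exact hx

section

variable {E : Type*} [NormedAddCommGroup E] [InnerProductSpace ℝ E]

theorem lipschitzWith_inv_norm_smul_add_orthogonal {v : E} (hv : ‖v‖ = 1) :
    LipschitzWith 2 fun w : (ℝ ∙ v)ᗮ => ‖(w : E) + v‖⁻¹ • ((w : E) + v) := by
  have hshift : MapsTo (fun w : (ℝ ∙ v)ᗮ => (w : E) + v) univ {x | ((1 : ℝ≥0) : ℝ) ≤ ‖x‖} := by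
    intro w _
    have hwv : ⟪(w : E), v⟫ = 0 := by
      rw [real_inner_comm]; exact Submodule.mem_orthogonal_singleton_iff_inner_right.mp w.2
    have h := norm_add_sq_eq_norm_sq_add_norm_sq_real hwv
    rw [hv, mul_one] at h
    show (1 : ℝ) ≤ _
    nlinarith [norm_nonneg ((w : E) + v), mul_self_nonneg ‖(w : E)‖]
  have hisom : Isometry fun w : (ℝ ∙ v)ᗮ => (w : E) + v :=
    (IsometryEquiv.addRight v).isometry.comp (ℝ ∙ v)ᗮ.subtypeₗᵢ.isometry
  have h := lipschitzOnWith_univ.mp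
    ((lipschitzOnWith_inv_norm_smul one_pos).comp hisom.lipschitz.lipschitzOnWith hshift)
  rw [div_one, mul_one] at h
  exact h

theorem sphere_inter_halfSpace_subset_image_closedBall {v : E} (hv : ‖v‖ = 1) :
    sphere (0 : E) 1 ∩ {y | 1 / 2 < ⟪v, y⟫} ⊆
      (fun w : (ℝ ∙ v)ᗮ => ‖(w : E) + v‖⁻¹ • ((w : E) + v)) '' closedBall 0 3 := by
  rintro y ⟨hy, hvy : 1 / 2 < ⟪v, y⟫⟩
  rw [mem_sphere_zero_iff_norm] at hy
  set a := ⟪v, y⟫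
  have ha : 0 < a := by linarith
  have hw : a⁻¹ • y - v ∈ (ℝ ∙ v)ᗮ := by
    rw [Submodule.mem_orthogonal_singleton_iff_inner_right, inner_sub_right,
      real_inner_smul_right, real_inner_self_eq_norm_sq, hv]
    field_simp
    ring
  refine ⟨⟨_, hw⟩, ?_, ?_⟩
  · rw [mem_closedBall_zero_iff, Submodule.coe_norm]
    calc ‖a⁻¹ • y - v‖ ≤ ‖a⁻¹ • y‖ + ‖v‖ := norm_sub_le _ _
      _ = a⁻¹ + 1 := by rw [norm_smul, hy, hv, Real.norm_eq_abs, abs_inv, abs_of_pos ha, mul_one]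
      _ ≤ 3 := by
        have : a⁻¹ ≤ 2 := by rw [inv_le_comm₀ ha two_pos]; linarith
        linarith
  · simp only [sub_add_cancel, norm_smul, hy, Real.norm_eq_abs, abs_inv, abs_of_pos ha, mul_one,
      inv_inv, smul_smul, mul_inv_cancel₀ ha.ne', one_smul]

def unitNormals (K : Set E) (v : E) : Set E :=
  {x | ‖x‖ = 1 ∧ ∀ z ∈ K, ⟪x, z - v⟫ ≤ 0}

theorem unitNormals_subset_sphere (K : Set E) (v : E) : unitNormals K v ⊆ sphere 0 1 :=
  fun _ hx => mem_sphere_zero_iff_norm.mpr hx.1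

theorem isClosed_unitNormals (K : Set E) (v : E) : IsClosed (unitNormals K v) := by
  have h : unitNormals K v = sphere 0 1 ∩ ⋂ z ∈ K, {x | ⟪x, z - v⟫ ≤ 0} := by
    ext x
    simp [unitNormals]
  rw [h]
  exact isClosed_sphere.inter <| isClosed_biInter fun z _ =>
    isClosed_le (continuous_id.inner continuous_const) continuous_const

theorem unitNormals_inter_subset {K : Set E} {v w : E} (hv : v ∈ K) (hw : w ∈ K) :
    unitNormals K v ∩ unitNormals K w ⊆ sphere 0 1 ∩ {x | ⟪w - v, x⟫ = 0} := by
  rintro x ⟨⟨hx, hxv⟩, -, hxw⟩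
  refine ⟨mem_sphere_zero_iff_norm.mpr hx, ?_⟩
  have h₁ := hxv w hw
  have h₂ := hxw v hv
  rw [inner_sub_right] at h₁ h₂
  show ⟪w - v, x⟫ = 0
  rw [inner_sub_left, real_inner_comm x w, real_inner_comm x v]
  linarith

theorem biUnion_unitNormals_convexHull {V : Finset E} (hV : V.Nonempty) :
    ⋃ v ∈ V, unitNormals (convexHull ℝ (V : Set E)) v = sphere 0 1 := by
  refine (iUnion₂_subset fun v _ => unitNormals_subset_sphere _ v).antisymm fun x hx => ?_
  obtain ⟨v, hvV, hvmax⟩ := V.exists_max_image (fun w => ⟪x, w⟫) hV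
  have hK : convexHull ℝ (V : Set E) ⊆ {z | ⟪x, z⟫ ≤ ⟪x, v⟫} :=
    convexHull_min hvmax (convex_halfSpace_le (innerₛₗ ℝ x).isLinear _)
  refine mem_biUnion hvV ⟨mem_sphere_zero_iff_norm.mp hx, fun z hz => ?_⟩
  rw [inner_sub_right, sub_nonpos]
  exact hK hz

variable [FiniteDimensional ℝ E] [MeasurableSpace E] [BorelSpace E] {d : ℕ}

theorem isAddHaarMeasure_hausdorffMeasure_orthogonal_span_singleton
    (hE : finrank ℝ E = d + 1) {v : E} (hv : v ≠ 0) :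
    (μH[d] : Measure (ℝ ∙ v)ᗮ).IsAddHaarMeasure := by
  have : Fact (finrank ℝ E = d + 1) := ⟨hE⟩
  have h := isAddHaarMeasure_hausdorffMeasure (E := (ℝ ∙ v)ᗮ)
  rwa [Submodule.finrank_orthogonal_span_singleton (n := d) hv] at h

theorem hausdorffMeasure_sphere_inter_orthogonal (hE : finrank ℝ E = d + 1) {v : E} (hv : v ≠ 0) :
    μH[d] (sphere (0 : E) 1 ∩ {x | ⟪v, x⟫ = 0}) = 0 := by
  have := isAddHaarMeasure_hausdorffMeasure_orthogonal_span_singleton hE hv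
  have himage : sphere (0 : E) 1 ∩ {x | ⟪v, x⟫ = 0} = Subtype.val '' sphere (0 : (ℝ ∙ v)ᗮ) 1 := by
    ext x
    simp [Submodule.mem_orthogonal_singleton_iff_inner_right, and_comm]
  rw [himage, isometry_subtype_coe.hausdorffMeasure_image (Or.inl d.cast_nonneg)]
  rcases subsingleton_or_nontrivial (ℝ ∙ v)ᗮ with _ | _
  · simp [sphere_eq_empty_of_subsingleton one_ne_zero]
  · exact Measure.addHaar_sphere _ 0 1

theorem hausdorffMeasure_sphere_pos (hE : finrank ℝ E = d + 1) : 0 < μH[d] (sphere (0 : E) 1) := by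
  have : Nontrivial E := Module.nontrivial_of_finrank_eq_succ hE
  obtain ⟨v, hv⟩ := exists_norm_eq E zero_le_one
  have hv0 : v ≠ 0 := norm_ne_zero_iff.mp (hv ▸ one_ne_zero)
  have := isAddHaarMeasure_hausdorffMeasure_orthogonal_span_singleton hE hv0
  set P := (ℝ ∙ v)ᗮ.orthogonalProjectionOnto
  have hball : closedBall (0 : (ℝ ∙ v)ᗮ) 1 ⊆ P '' sphere 0 1 := by
    intro w hw
    rw [mem_closedBall_zero_iff] at hw
    refine ⟨w + √(1 - ‖w‖ ^ 2) • v, ?_, ?_⟩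
    · have hwv : ⟪(w : E), √(1 - ‖w‖ ^ 2) • v⟫ = 0 := by
        rw [real_inner_smul_right, real_inner_comm,
          (Submodule.mem_orthogonal_singleton_iff_inner_right).mp w.2, mul_zero]
      rw [mem_sphere_zero_iff_norm, ← pow_eq_one_iff_of_nonneg (norm_nonneg _) two_ne_zero,
        sq, norm_add_sq_eq_norm_sq_add_norm_sq_real hwv, ← sq, ← sq, norm_smul, mul_pow,
        Real.norm_eq_abs, sq_abs, Real.sq_sqrt (by nlinarith [norm_nonneg w]), hv]
      simp
    · simp [P, Submodule.orthogonalProjectionOnto_orthogonalComplement_singleton_eq_zero]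
  calc 0 < μH[d] (closedBall (0 : (ℝ ∙ v)ᗮ) 1) := measure_closedBall_pos _ _ one_pos
    _ ≤ μH[d] (P '' sphere 0 1) := measure_mono hball
    _ ≤ 1 ^ (d : ℝ) * μH[d] (sphere (0 : E) 1) :=
      (Submodule.lipschitzWith_orthogonalProjectionOnto _).hausdorffMeasure_image_le d.cast_nonneg _
    _ = μH[d] (sphere (0 : E) 1) := by simp

theorem hausdorffMeasure_sphere_inter_halfSpace_lt_top (hE : finrank ℝ E = d + 1) {v : E}
    (hv : ‖v‖ = 1) : μH[d] (sphere (0 : E) 1 ∩ {y | 1 / 2 < ⟪v, y⟫}) < ∞ := by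
  have := isAddHaarMeasure_hausdorffMeasure_orthogonal_span_singleton hE
    (norm_ne_zero_iff.mp (hv ▸ one_ne_zero))
  calc μH[d] (sphere (0 : E) 1 ∩ {y | 1 / 2 < ⟪v, y⟫})
      ≤ μH[d] ((fun w : (ℝ ∙ v)ᗮ => ‖(w : E) + v‖⁻¹ • ((w : E) + v)) '' closedBall 0 3) :=
        measure_mono (sphere_inter_halfSpace_subset_image_closedBall hv)
    _ ≤ 2 ^ (d : ℝ) * μH[d] (closedBall (0 : (ℝ ∙ v)ᗮ) 3) :=
        (lipschitzWith_inv_norm_smul_add_orthogonal hv).hausdorffMeasure_image_le d.cast_nonneg _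
    _ < ∞ := ENNReal.mul_lt_top (by simp) measure_closedBall_lt_top

theorem hausdorffMeasure_sphere_lt_top (hE : finrank ℝ E = d + 1) :
    μH[d] (sphere (0 : E) 1) < ∞ := by
  obtain ⟨t, ht, hcover⟩ := (isCompact_sphere (0 : E) 1).elim_nhds_subcover
    (fun v => {y | 1 / 2 < ⟪v, y⟫}) fun v hv =>
      (isOpen_lt continuous_const (continuous_const.inner continuous_id)).mem_nhds (by
        rw [mem_sphere_zero_iff_norm] at hv
        norm_num [hv])
  calc μH[d] (sphere (0 : E) 1) ≤ μH[d] (⋃ v ∈ t, sphere (0 : E) 1 ∩ {y | 1 / 2 < ⟪v, y⟫}) := by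
        refine measure_mono fun y hy => ?_
        obtain ⟨v, hv, hyv⟩ := mem_iUnion₂.mp (hcover hy)
        exact mem_biUnion hv ⟨hy, hyv⟩
    _ ≤ ∑ v ∈ t, μH[d] (sphere (0 : E) 1 ∩ {y | 1 / 2 < ⟪v, y⟫}) := measure_biUnion_finset_le _ _
    _ < ∞ := ENNReal.sum_lt_top.mpr fun v hv =>
        hausdorffMeasure_sphere_inter_halfSpace_lt_top hE (mem_sphere_zero_iff_norm.mp (ht v hv))

theorem sum_hausdorffMeasure_unitNormals_convexHull (hE : finrank ℝ E = d + 1) {V : Finset E}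
    (hV : V.Nonempty) :
    ∑ v ∈ V, μH[d] (unitNormals (convexHull ℝ (V : Set E)) v) = μH[d] (sphere (0 : E) 1) := by
  rw [← biUnion_unitNormals_convexHull hV]
  refine (measure_biUnion_finset₀ (fun v hv w hw hvw => ?_)
    fun v _ => (isClosed_unitNormals _ v).measurableSet.nullMeasurableSet).symm
  exact measure_mono_null
    (unitNormals_inter_subset (subset_convexHull ℝ _ hv) (subset_convexHull ℝ _ hw))
    (hausdorffMeasure_sphere_inter_orthogonal hE (sub_ne_zero.mpr (Ne.symm hvw)))

end

theorem sum_normal_fractions_eq_one_general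
    (d : ℕ) (V : Finset (EuclideanSpace ℝ (Fin (d + 1))))
    (hint : (interior (convexHull ℝ (V : Set (EuclideanSpace ℝ (Fin (d + 1)))))).Nonempty) :
    ∑ v ∈ V,
      (μH[(d : ℝ)] {x : EuclideanSpace ℝ (Fin (d + 1)) |
          ‖x‖ = 1 ∧ ∀ z ∈ convexHull ℝ (V : Set (EuclideanSpace ℝ (Fin (d + 1)))),
            ⟪x, z - v⟫ ≤ 0}).toReal /
        (μH[(d : ℝ)] (Metric.sphere (0 : EuclideanSpace ℝ (Fin (d + 1))) 1)).toReal
      = 1 := by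
  have hE : finrank ℝ (EuclideanSpace ℝ (Fin (d + 1))) = d + 1 := finrank_euclideanSpace_fin
  have hV : V.Nonempty := Finset.nonempty_iff_ne_empty.mpr fun h => by simp [h] at hint
  have hfin := hausdorffMeasure_sphere_lt_top hE
  change ∑ v ∈ V, (μH[d] (unitNormals (convexHull ℝ (V : Set _)) v)).toReal / _ = 1
  rw [← Finset.sum_div, ← ENNReal.toReal_sum fun v _ =>
      ((measure_mono (unitNormals_subset_sphere _ v)).trans_lt hfin).ne,
    sum_hausdorffMeasure_unitNormals_convexHull hE hV]
  exact div_self (ENNReal.toReal_ne_zero.mpr ⟨(hausdorffMeasure_sphere_pos hE).ne', hfin.ne⟩)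

/-- Gauss–Bonnet/Federer for convex polytopes: the fractions of the unit sphere `S^d`
occupied by the outer normal cones at the vertices of a convex polytope
`K ⊂ ℝ^{d+1}` with nonempty interior sum to `1`. -/
theorem sum_normal_fractions_eq_one
    (d : ℕ) (V : Finset (EuclideanSpace ℝ (Fin (d + 1))))
    (hint : (interior (convexHull ℝ (V : Set (EuclideanSpace ℝ (Fin (d + 1)))))).Nonempty)
    (hvert : ∀ v ∈ V, v ∉ convexHull ℝ ((V : Set (EuclideanSpace ℝ (Fin (d + 1)))) \ {v})) :
    ∑ v ∈ V,
      (μH[(d : ℝ)] {x : EuclideanSpace ℝ (Fin (d + 1)) |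
          ‖x‖ = 1 ∧ ∀ z ∈ convexHull ℝ (V : Set (EuclideanSpace ℝ (Fin (d + 1)))),
            ⟪x, z - v⟫ ≤ 0}).toReal /
        (μH[(d : ℝ)] (Metric.sphere (0 : EuclideanSpace ℝ (Fin (d + 1))) 1)).toReal
      = 1 :=
  sum_normal_fractions_eq_one_general d V hint
end

section
/- For every t ∈ [0, 1), arcsin(t) < π/2 - √(2 - 2t). -/
/-!
Put `θ = arccos t ∈ (0, π]`, so that `arcsin t = π/2 - θ` and `t = cos θ`. Then `√(2 - 2t)` is the
chord `2 sin (θ/2)` subtending an arc of length `θ`, and the chord is strictly shorter than the arc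
because `sin x < x` for `x > 0`.
-/

open Real

theorem sqrt_two_sub_two_mul_cos (θ : ℝ) : √(2 - 2 * cos θ) = 2 * |sin (θ / 2)| := by
  have hchord : 2 - 2 * cos θ = (2 * sin (θ / 2)) ^ 2 := by
    have hdouble : cos θ = 1 - 2 * sin (θ / 2) ^ 2 := by
      rw [← cos_two_mul_eq_one_sub, mul_div_cancel₀ θ two_ne_zero]
    rw [hdouble]
    ring
  rw [hchord, sqrt_sq_eq_abs, abs_mul, abs_two]

theorem sqrt_two_sub_two_mul_cos_lt_abs {θ : ℝ} (hθ : θ ≠ 0) : √(2 - 2 * cos θ) < |θ| := by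
  have hsin : |sin (θ / 2)| < |θ / 2| := abs_sin_lt_abs (div_ne_zero hθ two_ne_zero)
  rw [abs_div, abs_two] at hsin
  rw [sqrt_two_sub_two_mul_cos]
  linarith

/-- For every `t ∈ [0, 1)`, `arcsin t < π/2 - √(2 - 2t)`. -/
theorem arcsin_lt_pi_div_two_sub_sqrt (t : ℝ) (ht0 : 0 ≤ t) (ht1 : t < 1) :
    Real.arcsin t < Real.pi / 2 - Real.sqrt (2 - 2 * t) := by
  have hθ : 0 < arccos t := arccos_pos.mpr ht1
  have hchord := sqrt_two_sub_two_mul_cos_lt_abs hθ.ne'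
  rw [cos_arccos (by linarith) ht1.le, abs_of_pos hθ] at hchord
  rw [arcsin_eq_pi_div_two_sub_arccos]
  linarith
end

section
/- Fix d ≥ 2 and 0 < ρ < ρ̄ < π/2. Suppose L₁,...,L_m are m lines through the origin in ℝ^d such that every line through the origin makes an angle less than ρ/2 with one of L₁,...,L_m. Then any set P ⊂ ℝ^d with |P| ≥ 2^m + 1 contains three points x, y, z with ∠xyz ≥ π - ρ. -/
open scoped RealInnerProductSpace

section Aux
open Real


private theorem arccos_antitone {x y : ℝ} (h : x ≤ y) : arccos y ≤ arccos x := by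
  unfold Real.arccos
  have := Real.monotone_arcsin h
  linarith

private theorem inner_le_proj {V : Type*} [NormedAddCommGroup V] [InnerProductSpace ℝ V]
    (u x y : V) (hu : ‖u‖ = 1) (hx : ‖x‖ = 1) (hy : ‖y‖ = 1) :
    ⟪x, y⟫ ≤ ⟪u, x⟫ * ⟪u, y⟫ + Real.sqrt (1 - ⟪u, x⟫ ^ 2) * Real.sqrt (1 - ⟪u, y⟫ ^ 2) := by
  have huu : ⟪u, u⟫ = 1 := by rw [real_inner_self_eq_norm_sq, hu]; norm_num
  have hxx : ⟪x, x⟫ = 1 := by rw [real_inner_self_eq_norm_sq, hx]; norm_num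
  have hyy : ⟪y, y⟫ = 1 := by rw [real_inner_self_eq_norm_sq, hy]; norm_num
  have hpq : ⟪x - ⟪u, x⟫ • u, y - ⟪u, y⟫ • u⟫ = ⟪x, y⟫ - ⟪u, x⟫ * ⟪u, y⟫ := by
    simp only [inner_sub_left, inner_sub_right, real_inner_smul_left, real_inner_smul_right,
      huu]
    rw [real_inner_comm x u]
    ring
  have hnp : ‖x - ⟪u, x⟫ • u‖ ^ 2 = 1 - ⟪u, x⟫ ^ 2 := by
    rw [← real_inner_self_eq_norm_sq]
    simp only [inner_sub_left, inner_sub_right, real_inner_smul_left, real_inner_smul_right,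
      huu, hxx]
    rw [real_inner_comm x u]
    ring
  have hnq : ‖y - ⟪u, y⟫ • u‖ ^ 2 = 1 - ⟪u, y⟫ ^ 2 := by
    rw [← real_inner_self_eq_norm_sq]
    simp only [inner_sub_left, inner_sub_right, real_inner_smul_left, real_inner_smul_right,
      huu, hyy]
    rw [real_inner_comm y u]
    ring
  have h1 : ⟪x - ⟪u, x⟫ • u, y - ⟪u, y⟫ • u⟫ ≤ ‖x - ⟪u, x⟫ • u‖ * ‖y - ⟪u, y⟫ • u‖ :=
    real_inner_le_norm _ _
  have h2 : ‖x - ⟪u, x⟫ • u‖ = Real.sqrt (1 - ⟪u, x⟫ ^ 2) := by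
    rw [← Real.sqrt_sq (norm_nonneg _), hnp]
  have h3 : ‖y - ⟪u, y⟫ • u‖ = Real.sqrt (1 - ⟪u, y⟫ ^ 2) := by
    rw [← Real.sqrt_sq (norm_nonneg _), hnq]
  rw [hpq, h2, h3] at h1
  linarith

/-- If `a` points within angle ρ/2 of `u` and `b` within ρ/2 of `-u`, then the
angle between `a` and `b` is at least `π - ρ`. -/
theorem big_angle {V : Type*} [NormedAddCommGroup V] [InnerProductSpace ℝ V]
    (u a b : V) (hu : ‖u‖ = 1) (ha : a ≠ 0) (hb : b ≠ 0)
    (ρ : ℝ) (hρ0 : 0 < ρ) (hρπ : ρ < Real.pi / 2)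
    (hA : Real.arccos (|⟪u, a⟫| / ‖a‖) < ρ / 2)
    (hB : Real.arccos (|⟪u, b⟫| / ‖b‖) < ρ / 2)
    (hsA : 0 < ⟪u, a⟫) (hsB : ⟪u, b⟫ < 0) :
    Real.pi - ρ ≤ InnerProductGeometry.angle a b := by
  have hna : (0:ℝ) < ‖a‖ := norm_pos_iff.mpr ha
  have hnb : (0:ℝ) < ‖b‖ := norm_pos_iff.mpr hb
  have hca0 : 0 < ⟪u, a⟫ / ‖a‖ := div_pos hsA hna
  have hcb0 : 0 < -⟪u, b⟫ / ‖b‖ := div_pos (by linarith) hnb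
  have hca1 : ⟪u, a⟫ / ‖a‖ ≤ 1 := by
    rw [div_le_one hna]
    calc ⟪u, a⟫ ≤ ‖u‖ * ‖a‖ := real_inner_le_norm u a
    _ = ‖a‖ := by rw [hu, one_mul]
  have hcb1 : -⟪u, b⟫ / ‖b‖ ≤ 1 := by
    rw [div_le_one hnb]
    calc -⟪u, b⟫ = ⟪u, -b⟫ := by rw [inner_neg_right]
    _ ≤ ‖u‖ * ‖-b‖ := real_inner_le_norm u (-b)
    _ = ‖b‖ := by rw [hu, one_mul, norm_neg]
  have hαρ : arccos (⟪u, a⟫ / ‖a‖) < ρ / 2 := by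
    rwa [abs_of_pos hsA] at hA
  have hβρ : arccos (-⟪u, b⟫ / ‖b‖) < ρ / 2 := by
    rwa [abs_of_neg hsB] at hB
  have hα0 : 0 ≤ arccos (⟪u, a⟫ / ‖a‖) := arccos_nonneg _
  have hβ0 : 0 ≤ arccos (-⟪u, b⟫ / ‖b‖) := arccos_nonneg _
  have hcosα : Real.cos (arccos (⟪u, a⟫ / ‖a‖)) = ⟪u, a⟫ / ‖a‖ :=
    Real.cos_arccos (by linarith) hca1
  have hcosβ : Real.cos (arccos (-⟪u, b⟫ / ‖b‖)) = -⟪u, b⟫ / ‖b‖ :=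
    Real.cos_arccos (by linarith) hcb1
  have hsinα : Real.sin (arccos (⟪u, a⟫ / ‖a‖)) = Real.sqrt (1 - (⟪u, a⟫ / ‖a‖) ^ 2) :=
    Real.sin_arccos _
  have hsinβ : Real.sin (arccos (-⟪u, b⟫ / ‖b‖)) = Real.sqrt (1 - (-⟪u, b⟫ / ‖b‖) ^ 2) :=
    Real.sin_arccos _
  have hna' : ‖(‖a‖⁻¹ • a : V)‖ = 1 := by
    rw [norm_smul, norm_inv, norm_norm, inv_mul_cancel₀ hna.ne']
  have hnb' : ‖(‖b‖⁻¹ • b : V)‖ = 1 := by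
    rw [norm_smul, norm_inv, norm_norm, inv_mul_cancel₀ hnb.ne']
  have hua' : ⟪u, (‖a‖⁻¹ • a : V)⟫ = ⟪u, a⟫ / ‖a‖ := by
    rw [real_inner_smul_right]; field_simp
  have hub' : ⟪u, (‖b‖⁻¹ • b : V)⟫ = -(-⟪u, b⟫ / ‖b‖) := by
    rw [real_inner_smul_right]; field_simp
  have hkey := inner_le_proj u (‖a‖⁻¹ • a) (‖b‖⁻¹ • b) hu hna' hnb'
  rw [hua', hub'] at hkey
  have hkey2 : ⟪(‖a‖⁻¹ • a : V), (‖b‖⁻¹ • b : V)⟫ ≤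
      -Real.cos (arccos (⟪u, a⟫ / ‖a‖) + arccos (-⟪u, b⟫ / ‖b‖)) := by
    rw [Real.cos_add, hcosα, hcosβ, hsinα, hsinβ]
    have : (-(-⟪u, b⟫ / ‖b‖)) ^ 2 = (-⟪u, b⟫ / ‖b‖) ^ 2 := by ring
    rw [this] at hkey
    linarith
  have hαβρ : arccos (⟪u, a⟫ / ‖a‖) + arccos (-⟪u, b⟫ / ‖b‖) ≤ ρ := by linarith
  have hcosρ : Real.cos ρ ≤ Real.cos (arccos (⟪u, a⟫ / ‖a‖) + arccos (-⟪u, b⟫ / ‖b‖)) :=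
    Real.cos_le_cos_of_nonneg_of_le_pi (by linarith) (by linarith [Real.pi_pos]) hαβρ
  have hfin : ⟪(‖a‖⁻¹ • a : V), (‖b‖⁻¹ • b : V)⟫ ≤ Real.cos (Real.pi - ρ) := by
    rw [Real.cos_pi_sub]; linarith
  have hab' : ⟪(‖a‖⁻¹ • a : V), (‖b‖⁻¹ • b : V)⟫ = ⟪a, b⟫ / (‖a‖ * ‖b‖) := by
    rw [real_inner_smul_left, real_inner_smul_right]
    field_simp
  have hangle : InnerProductGeometry.angle a b = arccos (⟪a, b⟫ / (‖a‖ * ‖b‖)) := rfl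
  rw [hangle, ← hab']
  calc Real.pi - ρ = arccos (Real.cos (Real.pi - ρ)) := by
        rw [Real.arccos_cos (by linarith [Real.pi_pos]) (by linarith)]
  _ ≤ arccos ⟪(‖a‖⁻¹ • a : V), (‖b‖⁻¹ • b : V)⟫ := arccos_antitone hfin


theorem sign_pigeonhole {V : Type*} [DecidableEq V] (m : ℕ) (P : Finset V)
    (c : V → V → Fin m) (s : V → V → ℝ)
    (hsym : ∀ x y : V, x ≠ y → c x y = c y x)
    (hskew : ∀ x y : V, x ≠ y → s x y = - s y x)
    (hne : ∀ x ∈ P, ∀ y ∈ P, x ≠ y → s x y ≠ 0)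
    (hagree : ∀ x ∈ P, ∀ y ∈ P, ∀ z ∈ P, x ≠ y → z ≠ y → c x y = c z y →
      (0 < s x y ↔ 0 < s z y)) :
    P.card ≤ 2 ^ m := by
  classical
  set F : V → Fin m → Bool := fun y i => decide (∃ x ∈ P, x ≠ y ∧ c x y = i ∧ 0 < s x y)
    with hF
  have claim : ∀ y ∈ P, ∀ y' ∈ P, y' ≠ y → 0 < s y' y →
      F y (c y' y) = true ∧ F y' (c y' y) = false := by
    intro y hy y' hy' hne' hpos
    constructor
    · simp only [hF, decide_eq_true_eq]
      exact ⟨y', hy', hne', rfl, hpos⟩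
    · simp only [hF, decide_eq_false_iff_not]
      rintro ⟨x, hx, hxy', hcx, hsx⟩
      have hyy' : y ≠ y' := fun h => hne' h.symm
      have hcy : c y y' = c y' y := hsym y y' hyy'
      have hsy : s y y' < 0 := by
        rw [hskew y y' hyy']; linarith
      have := hagree x hx y' hy' y hy hxy' hyy' (by rw [hcx, hcy])
      rw [this] at hsx
      linarith
  have hinj : Set.InjOn F P := by
    intro y hy y' hy' hFeq
    by_contra hne'
    have hne'' : y' ≠ y := fun h => hne' h.symm
    rcases lt_or_gt_of_ne (hne y' hy' y hy hne'') with hlt | hgt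
    · have hpos : 0 < s y y' := by rw [hskew y y' hne']; linarith
      obtain ⟨h1, h2⟩ := claim y' hy' y hy hne' hpos
      rw [← hFeq] at h1; rw [h1] at h2; exact absurd h2 (by simp)
    · obtain ⟨h1, h2⟩ := claim y hy y' hy' hne'' hgt
      rw [hFeq] at h1; rw [h1] at h2; exact absurd h2 (by simp)
  calc P.card ≤ (Finset.univ : Finset (Fin m → Bool)).card :=
        Finset.card_le_card_of_injOn F (fun _ _ => Finset.mem_univ _) hinj
  _ = 2 ^ m := by simp [Finset.card_univ]

end Aux

/-- Covering upper bound (Erdős–Füredi): if `m` lines through the origin of `ℝ^d`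
(given by unit vectors `u i`) are such that every line makes an angle less than `ρ/2`
with one of them, then every set of at least `2^m + 1` points contains three points
forming an angle at least `π - ρ`. -/
theorem covering_bound
    (d : ℕ) (hd : 2 ≤ d)
    (ρ ρbar : ℝ) (hρ0 : 0 < ρ) (hρ : ρ < ρbar) (hρbar : ρbar < Real.pi / 2)
    (m : ℕ) (u : Fin m → EuclideanSpace ℝ (Fin d))
    (hu : ∀ i, ‖u i‖ = 1)
    (hcover : ∀ v : EuclideanSpace ℝ (Fin d), v ≠ 0 →
      ∃ i, Real.arccos (|⟪u i, v⟫| / ‖v‖) < ρ / 2)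
    (P : Finset (EuclideanSpace ℝ (Fin d))) (hP : 2 ^ m + 1 ≤ P.card) :
    ∃ x ∈ P, ∃ y ∈ P, ∃ z ∈ P, x ≠ y ∧ z ≠ y ∧ x ≠ z ∧
      Real.pi - ρ ≤ EuclideanGeometry.angle x y z := by
  classical
  have hρπ : ρ < Real.pi / 2 := lt_trans hρ hρbar
  -- get two distinct points and hence an element of `Fin m`
  have hcard2 : 1 < P.card := by
    have : 1 ≤ 2 ^ m := Nat.one_le_two_pow
    omega
  obtain ⟨a₀, ha₀, b₀, hb₀, hab₀⟩ := Finset.one_lt_card.mp hcard2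
  obtain ⟨i₀, -⟩ := hcover (a₀ - b₀) (sub_ne_zero.mpr hab₀)
  -- the coloring
  set S : EuclideanSpace ℝ (Fin d) → EuclideanSpace ℝ (Fin d) → Finset (Fin m) := fun x y =>
    Finset.univ.filter (fun i => Real.arccos (|⟪u i, x - y⟫| / ‖x - y‖) < ρ / 2) with hS
  have hSne : ∀ x y : EuclideanSpace ℝ (Fin d), x ≠ y → (S x y).Nonempty := by
    intro x y hxy
    obtain ⟨i, hi⟩ := hcover (x - y) (sub_ne_zero.mpr hxy)
    exact ⟨i, by rw [hS]; exact Finset.mem_filter.mpr ⟨Finset.mem_univ _, hi⟩⟩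
  have hSsymm : ∀ x y : EuclideanSpace ℝ (Fin d), S x y = S y x := by
    intro x y
    simp only [hS]
    congr 1
    funext i
    have h1 : |⟪u i, x - y⟫| = |⟪u i, y - x⟫| := by
      rw [show (x - y : EuclideanSpace ℝ (Fin d)) = -(y - x) by abel, inner_neg_right, abs_neg]
    have h2 : ‖(x - y : EuclideanSpace ℝ (Fin d))‖ = ‖(y - x : EuclideanSpace ℝ (Fin d))‖ := by
      rw [show (x - y : EuclideanSpace ℝ (Fin d)) = -(y - x) by abel, norm_neg]
    rw [h1, h2]
  set c : EuclideanSpace ℝ (Fin d) → EuclideanSpace ℝ (Fin d) → Fin m := fun x y =>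
    if h : x ≠ y then (S x y).min' (hSne x y h) else i₀ with hc
  have hcmem : ∀ x y : EuclideanSpace ℝ (Fin d), x ≠ y → Real.arccos (|⟪u (c x y), x - y⟫| / ‖x - y‖) < ρ / 2 := by
    intro x y hxy
    have : c x y ∈ S x y := by
      rw [hc]; simp only [dif_pos hxy]; exact (S x y).min'_mem _
    simpa [hS] using this
  have hcsym : ∀ x y : EuclideanSpace ℝ (Fin d), x ≠ y → c x y = c y x := by
    intro x y hxy
    rw [hc]
    simp only [dif_pos hxy, dif_pos (Ne.symm hxy)]
    congr 1 <;> rw [hSsymm]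
  set s : EuclideanSpace ℝ (Fin d) → EuclideanSpace ℝ (Fin d) → ℝ := fun x y => ⟪u (c x y), x - y⟫ with hs
  have hskew : ∀ x y : EuclideanSpace ℝ (Fin d), x ≠ y → s x y = - s y x := by
    intro x y hxy
    rw [hs]
    simp only
    rw [hcsym x y hxy, show (x - y : EuclideanSpace ℝ (Fin d)) = -(y - x) by abel, inner_neg_right]
  have hsne : ∀ x y : EuclideanSpace ℝ (Fin d), x ≠ y → s x y ≠ 0 := by
    intro x y hxy
    have h1 := hcmem x y hxy
    have h2 : Real.arccos (|⟪u (c x y), x - y⟫| / ‖x - y‖) < Real.pi / 2 := by linarith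
    have h3 : 0 < |⟪u (c x y), x - y⟫| / ‖x - y‖ := Real.arccos_lt_pi_div_two.mp h2
    intro h0
    rw [hs] at h0; simp only at h0
    rw [h0] at h3
    simp at h3
  -- suppose no big angle
  by_contra hcon
  push_neg at hcon
  have hagree : ∀ x ∈ P, ∀ y ∈ P, ∀ z ∈ P, x ≠ y → z ≠ y → c x y = c z y →
      (0 < s x y ↔ 0 < s z y) := by
    intro x hx y hy z hz hxy hzy hcc
    by_cases hxz : x = z
    · rw [hxz]
    · have hang := hcon x hx y hy z hz hxy hzy hxz
      have hangeq : EuclideanGeometry.angle x y z =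
          InnerProductGeometry.angle (x - y) (z - y) := rfl
      have ha : (x - y : EuclideanSpace ℝ (Fin d)) ≠ 0 := sub_ne_zero.mpr hxy
      have hb : (z - y : EuclideanSpace ℝ (Fin d)) ≠ 0 := sub_ne_zero.mpr hzy
      have hAx := hcmem x y hxy
      have hBz := hcmem z y hzy
      rw [hcc] at hAx
      rcases lt_or_gt_of_ne (hsne x y hxy) with hlt | hgt
      · rcases lt_or_gt_of_ne (hsne z y hzy) with hlt' | hgt'
        · exact iff_of_false (by linarith) (by linarith)
        · exfalso
          have hsx : ⟪u (c z y), x - y⟫ < 0 := by rw [← hcc]; exact hlt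
          have hsz : 0 < ⟪u (c z y), z - y⟫ := hgt'
          have := big_angle (u (c z y)) (z - y) (x - y) (hu _) hb ha ρ hρ0 hρπ hBz hAx hsz hsx
          rw [InnerProductGeometry.angle_comm, ← hangeq] at this
          linarith
      · rcases lt_or_gt_of_ne (hsne z y hzy) with hlt' | hgt'
        · exfalso
          have hsx : 0 < ⟪u (c z y), x - y⟫ := by rw [← hcc]; exact hgt
          have hsz : ⟪u (c z y), z - y⟫ < 0 := hlt'
          have := big_angle (u (c z y)) (x - y) (z - y) (hu _) ha hb ρ hρ0 hρπ hAx hBz hsx hsz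
          rw [← hangeq] at this
          linarith
        · exact iff_of_true (by linarith) (by linarith)
  have := sign_pigeonhole m P c s hcsym hskew
    (fun x hx y hy hxy => hsne x y hxy) hagree
  omega
end

section
/- Fix d ≥ 2 and 0 < ρ < π/2. Suppose there exist m lines L₁,...,L_m through the origin in ℝ^d such that the angle between any two of them exceeds ρ. Then there exists a set P ⊂ ℝ^d with |P| = 2^m and ∠P < π - ρ (every angle formed by three points of P is less than π - ρ). -/
/-!
Take `P = {∑_{i ∈ S} Cⁱ uᵢ : S ⊆ Fin m}` for a large base `C`. The difference of two points of `P`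
is dominated by its top term: it is `Cᵏ (±u_k + a)` with `‖a‖ ≤ δ := 1/(C - 1)`, and a relative
perturbation of size `δ` turns a vector by at most `arccos ((1 - δ)/(1 + δ)) → 0`. So the angle of
`P` at any apex is, up to this error on both sides, the angle between `±u_k` and `±u_l`: either `0`
(when `k = l`, since the sign of `u_k` depends only on the apex) or at most `π` minus the angle
between the lines `L_k` and `L_l`.
-/

open scoped RealInnerProductSpace symmDiff
open Real Filter Topology InnerProductGeometry

section Angles

variable {V : Type*} [NormedAddCommGroup V] [InnerProductSpace ℝ V]

theorem InnerProductGeometry.angle_add_le_arccos {x a : V} {ε : ℝ} (hx : x ≠ 0) (hε : ε < 1)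
    (ha : ‖a‖ ≤ ε * ‖x‖) : angle x (x + a) ≤ arccos ((1 - ε) / (1 + ε)) := by
  have hx0 : 0 < ‖x‖ := norm_pos_iff.2 hx
  have hε0 : 0 ≤ ε := nonneg_of_mul_nonneg_left ((norm_nonneg a).trans ha) hx0
  have hupper : ‖x + a‖ ≤ (1 + ε) * ‖x‖ := by linarith [norm_add_le x a]
  have hlower : (1 - ε) * ‖x‖ ≤ ‖x + a‖ := by
    have h := norm_sub_norm_le x (-a)
    rw [norm_neg, sub_neg_eq_add] at h
    linarith
  have hinner : (1 - ε) * ‖x‖ ^ 2 ≤ ⟪x, x + a⟫ := by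
    rw [inner_add_right, real_inner_self_eq_norm_sq]
    nlinarith [neg_abs_le ⟪x, a⟫, abs_real_inner_le_norm x a]
  refine arccos_le_arccos ?_
  rw [div_le_div_iff₀ (by linarith) (mul_pos hx0 (by nlinarith))]
  nlinarith [mul_le_mul_of_nonneg_left hupper hx0.le]

theorem InnerProductGeometry.angle_le_pi_sub_arccos_abs_inner {x y : V} (hx : ‖x‖ = 1)
    (hy : ‖y‖ = 1) : angle x y ≤ π - arccos |⟪x, y⟫| := by
  rw [angle, hx, hy, mul_one, div_one, ← arccos_neg]
  exact arccos_le_arccos (neg_abs_le _)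

theorem InnerProductGeometry.angle_add_add_le {x y a b : V} {ε : ℝ} (hx : x ≠ 0) (hy : y ≠ 0)
    (hε : ε < 1) (ha : ‖a‖ ≤ ε * ‖x‖) (hb : ‖b‖ ≤ ε * ‖y‖) :
    angle (x + a) (y + b) ≤ angle x y + 2 * arccos ((1 - ε) / (1 + ε)) := by
  have hxa := angle_add_le_arccos hx hε ha
  have hyb := angle_add_le_arccos hy hε hb
  calc angle (x + a) (y + b) ≤ angle (x + a) x + angle x (y + b) := angle_le_angle_add_angle _ _ _
    _ ≤ angle x (x + a) + (angle x y + angle y (y + b)) := by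
      rw [angle_comm (x + a)]; gcongr; exact angle_le_angle_add_angle _ _ _
    _ ≤ angle x y + 2 * arccos ((1 - ε) / (1 + ε)) := by linarith

theorem tendsto_arccos_one_sub_div_one_add :
    Tendsto (fun ε : ℝ => arccos ((1 - ε) / (1 + ε))) (𝓝 0) (𝓝 0) := by
  have : ContinuousAt (fun ε : ℝ => arccos ((1 - ε) / (1 + ε))) 0 := by
    fun_prop (disch := norm_num)
  simpa using this.tendsto

end Angles

section Lacunary

variable {V : Type*} [NormedAddCommGroup V] {m : ℕ}

def negOn {ι : Type*} [DecidableEq ι] (T : Finset ι) (u : ι → V) (i : ι) : V :=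
  if i ∈ T then -u i else u i

@[simp]
theorem norm_negOn {ι : Type*} [DecidableEq ι] (T : Finset ι) (u : ι → V) (i : ι) :
    ‖negOn T u i‖ = ‖u i‖ := by
  unfold negOn; split_ifs <;> simp

variable [NormedSpace ℝ V]

noncomputable def lacunarySum (C : ℝ) (w : Fin m → V) (S : Finset (Fin m)) : V :=
  ∑ i ∈ S, C ^ (i : ℕ) • w i

theorem lacunarySum_sub_lacunarySum (C : ℝ) (u : Fin m → V) (S T : Finset (Fin m)) :
    lacunarySum C u S - lacunarySum C u T = lacunarySum C (negOn T u) (S ∆ T) := by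
  have hS : ∑ i ∈ S \ T, C ^ (i : ℕ) • negOn T u i = ∑ i ∈ S \ T, C ^ (i : ℕ) • u i :=
    Finset.sum_congr rfl fun i hi => by simp [negOn, (Finset.mem_sdiff.1 hi).2]
  have hT : ∑ i ∈ T \ S, C ^ (i : ℕ) • negOn T u i = -∑ i ∈ T \ S, C ^ (i : ℕ) • u i := by
    rw [← Finset.sum_neg_distrib]
    exact Finset.sum_congr rfl fun i hi => by simp [negOn, (Finset.mem_sdiff.1 hi).1]
  rw [lacunarySum, lacunarySum, lacunarySum, Finset.symmDiff_def,
    Finset.sum_union disjoint_sdiff_sdiff, hS, hT, ← Finset.sum_sdiff_sub_sum_sdiff]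
  abel

theorem norm_lacunarySum_le {C : ℝ} (hC : 1 < C) {w : Fin m → V} (hw : ∀ i, ‖w i‖ = 1)
    {S : Finset (Fin m)} {k : Fin m} (hS : ∀ i ∈ S, i < k) :
    ‖lacunarySum C w S‖ ≤ C ^ (k : ℕ) / (C - 1) := by
  have hC0 : 0 < C := by linarith
  calc ‖lacunarySum C w S‖ ≤ ∑ i ∈ S, ‖C ^ (i : ℕ) • w i‖ := norm_sum_le _ _
    _ = ∑ n ∈ S.map Fin.valEmbedding, C ^ n := by
      rw [Finset.sum_map]
      exact Finset.sum_congr rfl fun i _ => by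
        rw [norm_smul, hw, mul_one, Real.norm_of_nonneg (by positivity)]; rfl
    _ ≤ ∑ n ∈ Finset.range k, C ^ n := by
      refine Finset.sum_le_sum_of_subset_of_nonneg ?_ fun _ _ _ => by positivity
      intro n hn
      obtain ⟨i, hi, rfl⟩ := Finset.mem_map.1 hn
      exact Finset.mem_range.2 (hS i hi)
    _ = (C ^ (k : ℕ) - 1) / (C - 1) := geom_sum_eq hC.ne' _
    _ ≤ C ^ (k : ℕ) / (C - 1) := by gcongr; linarith

theorem exists_lacunarySum_eq_smul_add {C : ℝ} (hC : 1 < C) {w : Fin m → V}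
    (hw : ∀ i, ‖w i‖ = 1) {S : Finset (Fin m)} (hS : S.Nonempty) :
    ∃ k ∈ S, ∃ a : V, ‖a‖ ≤ (C - 1)⁻¹ ∧ lacunarySum C w S = C ^ (k : ℕ) • (w k + a) := by
  set k := S.max' hS
  have hCk : 0 < C ^ (k : ℕ) := pow_pos (by linarith) _
  refine ⟨k, S.max'_mem hS, (C ^ (k : ℕ))⁻¹ • lacunarySum C w (S.erase k), ?_, ?_⟩
  · have htail := norm_lacunarySum_le (k := k) hC hw fun i hi =>
      lt_of_le_of_ne (S.le_max' i (Finset.mem_of_mem_erase hi)) (Finset.ne_of_mem_erase hi)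
    rw [norm_smul, norm_inv, Real.norm_of_nonneg hCk.le, inv_mul_le_iff₀ hCk]
    simpa [div_eq_mul_inv] using htail
  · rw [smul_add, smul_inv_smul₀ hCk.ne', lacunarySum, lacunarySum,
      ← Finset.add_sum_erase S _ (S.max'_mem hS)]

theorem lacunarySum_ne_zero {C : ℝ} (hC : 2 < C) {w : Fin m → V} (hw : ∀ i, ‖w i‖ = 1)
    {S : Finset (Fin m)} (hS : S.Nonempty) : lacunarySum C w S ≠ 0 := by
  obtain ⟨k, -, a, ha, hsum⟩ := exists_lacunarySum_eq_smul_add (C := C) (by linarith) hw hS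
  have ha1 : ‖a‖ < 1 := ha.trans_lt (inv_lt_one_of_one_lt₀ (by linarith))
  rw [hsum, smul_ne_zero_iff]
  refine ⟨pow_ne_zero _ (by linarith), fun h => ?_⟩
  rw [add_eq_zero_iff_eq_neg] at h
  have := congrArg norm h
  rw [hw, norm_neg] at this
  linarith

theorem lacunarySum_injective {C : ℝ} (hC : 2 < C) {u : Fin m → V} (hu : ∀ i, ‖u i‖ = 1) :
    Function.Injective (lacunarySum C u) := by
  intro S T hST
  by_contra hne
  apply lacunarySum_ne_zero hC (fun i => (norm_negOn T u i).trans (hu i))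
    (Finset.symmDiff_nonempty.2 hne)
  rw [← lacunarySum_sub_lacunarySum, hST, sub_self]

end Lacunary

section LacunaryAngles

variable {V : Type*} [NormedAddCommGroup V] [InnerProductSpace ℝ V] {m : ℕ}

@[simp]
theorem abs_inner_negOn {ι : Type*} [DecidableEq ι] (T : Finset ι) (u : ι → V) (i j : ι) :
    |⟪negOn T u i, negOn T u j⟫| = |⟪u i, u j⟫| := by
  unfold negOn; split_ifs <;> simp [inner_neg_left, inner_neg_right]

theorem exists_angle_lacunarySum_le {C : ℝ} (hC : 2 < C) {w : Fin m → V}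
    (hw : ∀ i, ‖w i‖ = 1) {S T : Finset (Fin m)} (hS : S.Nonempty) (hT : T.Nonempty) :
    ∃ k l, angle (lacunarySum C w S) (lacunarySum C w T) ≤
      angle (w k) (w l) + 2 * arccos ((1 - (C - 1)⁻¹) / (1 + (C - 1)⁻¹)) := by
  have hne : ∀ i, w i ≠ 0 := fun i => norm_ne_zero_iff.1 (by simp [hw])
  have hε : (C - 1)⁻¹ < 1 := inv_lt_one_of_one_lt₀ (by linarith)
  obtain ⟨k, -, a, ha, hS⟩ := exists_lacunarySum_eq_smul_add (C := C) (by linarith) hw hS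
  obtain ⟨l, -, b, hb, hT⟩ := exists_lacunarySum_eq_smul_add (C := C) (by linarith) hw hT
  refine ⟨k, l, ?_⟩
  rw [hS, hT, angle_smul_left_of_pos _ _ (by positivity),
    angle_smul_right_of_pos _ _ (by positivity)]
  exact angle_add_add_le (hne k) (hne l) hε (by simpa [hw] using ha) (by simpa [hw] using hb)

theorem angle_lacunarySum_lt {δ ρ : ℝ} (hδ0 : 0 < δ) (hδ1 : δ < 1) {u : Fin m → V}
    (hu : ∀ i, ‖u i‖ = 1) (hπ : 2 * arccos ((1 - δ) / (1 + δ)) < π - ρ)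
    (hsep : ∀ i j, i ≠ j → ρ + 2 * arccos ((1 - δ) / (1 + δ)) < arccos |⟪u i, u j⟫|)
    {S T R : Finset (Fin m)} (hST : S ≠ T) (hRT : R ≠ T) :
    EuclideanGeometry.angle (lacunarySum (1 + δ⁻¹) u S) (lacunarySum (1 + δ⁻¹) u T)
      (lacunarySum (1 + δ⁻¹) u R) < π - ρ := by
  have hC : 2 < 1 + δ⁻¹ := by linarith [one_lt_inv_iff₀.2 ⟨hδ0, hδ1⟩]
  have hw : ∀ i, ‖negOn T u i‖ = 1 := fun i => (norm_negOn T u i).trans (hu i)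
  obtain ⟨k, l, hkl⟩ := exists_angle_lacunarySum_le hC hw
    (Finset.symmDiff_nonempty.2 hST) (Finset.symmDiff_nonempty.2 hRT)
  rw [EuclideanGeometry.angle, vsub_eq_sub, vsub_eq_sub, lacunarySum_sub_lacunarySum,
    lacunarySum_sub_lacunarySum]
  refine hkl.trans_lt ?_
  rw [add_sub_cancel_left, inv_inv]
  rcases eq_or_ne k l with rfl | hkl
  · rw [angle_self (norm_ne_zero_iff.1 (by simp [hw]))]
    linarith
  · have := angle_le_pi_sub_arccos_abs_inner (hw k) (hw l)
    rw [abs_inner_negOn] at this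
    linarith [hsep k l hkl]

end LacunaryAngles

theorem packing_bound_general
    (d : ℕ)
    (ρ : ℝ) (hρ : ρ < Real.pi / 2)
    (m : ℕ) (u : Fin m → EuclideanSpace ℝ (Fin d))
    (hu : ∀ i, ‖u i‖ = 1)
    (hsep : ∀ i j : Fin m, i ≠ j → ρ < Real.arccos |⟪u i, u j⟫|) :
    ∃ P : Finset (EuclideanSpace ℝ (Fin d)), P.card = 2 ^ m ∧
      ∀ x ∈ P, ∀ y ∈ P, ∀ z ∈ P, x ≠ y → z ≠ y →
        EuclideanGeometry.angle x y z < Real.pi - ρ := by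
  have hφ : Tendsto (fun δ : ℝ => 2 * arccos ((1 - δ) / (1 + δ))) (𝓝[>] 0) (𝓝 0) := by
    simpa using (tendsto_arccos_one_sub_div_one_add.const_mul 2).mono_left nhdsWithin_le_nhds
  have hsmall : ∀ᶠ δ in 𝓝[>] (0 : ℝ), δ < 1 ∧ 2 * arccos ((1 - δ) / (1 + δ)) < π - ρ ∧
      ∀ i j, i ≠ j → ρ + 2 * arccos ((1 - δ) / (1 + δ)) < arccos |⟪u i, u j⟫| := by
    refine ((eventually_lt_nhds one_pos).filter_mono nhdsWithin_le_nhds).and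
      ((hφ.eventually (gt_mem_nhds (by linarith [pi_pos]))).and ?_)
    refine eventually_all.2 fun i => eventually_all.2 fun j => eventually_imp_distrib_left.2 ?_
    exact fun hij => (hφ.eventually (gt_mem_nhds (sub_pos.2 (hsep i j hij)))).mono
      fun δ hδ => by linarith
  obtain ⟨δ, ⟨hδ1, hδπ, hδsep⟩, hδ0⟩ := (hsmall.and self_mem_nhdsWithin).exists
  have hC : 2 < 1 + δ⁻¹ := by linarith [one_lt_inv_iff₀.2 ⟨hδ0, hδ1⟩]
  refine ⟨Finset.univ.image (lacunarySum (1 + δ⁻¹) u), ?_, ?_⟩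
  · rw [Finset.card_image_of_injective _ (lacunarySum_injective hC hu), Finset.card_univ,
      Fintype.card_finset, Fintype.card_fin]
  simp only [Finset.mem_image, Finset.mem_univ, true_and]
  rintro _ ⟨S, rfl⟩ _ ⟨T, rfl⟩ _ ⟨R, rfl⟩ hST hRT
  exact angle_lacunarySum_lt hδ0 hδ1 hu hδπ hδsep (ne_of_apply_ne _ hST) (ne_of_apply_ne _ hRT)

/-- Packing lower bound (Erdős–Füredi): given `m` lines through the origin of `ℝ^d`
(unit vectors `u i`) any two of which make an angle greater than `ρ`, there exists a
set of `2^m` points all of whose angles are less than `π - ρ`. -/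
theorem packing_bound
    (d : ℕ) (hd : 2 ≤ d)
    (ρ : ℝ) (hρ0 : 0 < ρ) (hρ : ρ < Real.pi / 2)
    (m : ℕ) (u : Fin m → EuclideanSpace ℝ (Fin d))
    (hu : ∀ i, ‖u i‖ = 1)
    (hsep : ∀ i j : Fin m, i ≠ j → ρ < Real.arccos |⟪u i, u j⟫|) :
    ∃ P : Finset (EuclideanSpace ℝ (Fin d)), P.card = 2 ^ m ∧
      ∀ x ∈ P, ∀ y ∈ P, ∀ z ∈ P, x ≠ y → z ≠ y →
        EuclideanGeometry.angle x y z < Real.pi - ρ :=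
  packing_bound_general d ρ hρ m u hu hsep
end
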